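/- arXiv:2210.04779 — 5 statements merged into one kernel-verified Lean document; each statement's English description precedes it below -/
import Mathlib

section
/- Let N be a geometric random variable with parameter a ∈ (0,1), and let (X_n)_{n≥1} be i.i.d. geometric random variables with parameter b ∈ (0,1), independent of N. Then the random variable S = 1 + Σ_{n=1}^{N} (X_n − 1) is geometric with parameter ab/(1 − b + ab). -/
/-!
Write `Y n = X n - 1`, geometric on `ℕ` with `P(Y n = i) = b (1 - b)^i`. By induction and
convolution, the partial sums `T m = Y 1 + ⋯ + Y m` are negative binomial,
`P(T m = j) = multichoose m j * b^m * (1 - b)^j`; the count comes from the hockey-stick identity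
`∑_{i ≤ j} multichoose m i = multichoose (m + 1) j`. Since `N` is independent of every `T m`,
`P(S = j + 1) = ∑ₘ P(N = m) P(T m = j)`, and the binomial series
`∑ₘ choose (m + j) j * r^m = (1 - r)^{-(j+1)}` at `r = (1 - a) b` sums this to
`a b (1 - b)^j / (1 - b + a b)^{j+1} = p (1 - p)^j` with `p = a b / (1 - b + a b)`.
-/

open MeasureTheory ProbabilityTheory Finset
open scoped ENNReal

section

variable {Ω : Type*} [MeasurableSpace Ω] {μ : Measure Ω}

lemma hasSum_mul_one_sub_pow {c : ℝ} (hc : c ∈ Set.Ioo 0 1) :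
    HasSum (fun k : ℕ => c * (1 - c) ^ k) 1 := by
  have h := (hasSum_geometric_of_lt_one (r := 1 - c) (by linarith [hc.2])
    (by linarith [hc.1])).mul_left c
  rwa [sub_sub_cancel, mul_inv_cancel₀ hc.1.ne'] at h

lemma tsum_measure_setOf_eq [IsProbabilityMeasure μ] {Y : Ω → ℕ} (hY : Measurable Y) :
    ∑' k, μ {ω | Y ω = k} = 1 := by
  rw [← measure_iUnion (f := fun k => {ω | Y ω = k})
    (fun i j hij => Set.disjoint_left.2 fun ω hi hj => hij (hi.symm.trans hj))
    (fun k => hY (measurableSet_singleton k))]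
  convert measure_univ (μ := μ)
  ext ω
  simp

lemma measure_eq_zero_of_geometric [IsProbabilityMeasure μ] {c : ℝ} (hc : c ∈ Set.Ioo 0 1)
    {Y : Ω → ℕ} (hY : Measurable Y)
    (hlaw : ∀ k, 1 ≤ k → μ {ω | Y ω = k} = ENNReal.ofReal (c * (1 - c) ^ (k - 1))) :
    μ {ω | Y ω = 0} = 0 := by
  have htail : ∑' k, μ {ω | Y ω = k + 1} = 1 := by
    have hc0 : ∀ k : ℕ, 0 ≤ c * (1 - c) ^ k := fun k =>
      mul_nonneg hc.1.le (pow_nonneg (by linarith [hc.2]) k)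
    simp_rw [hlaw _ (Nat.le_add_left 1 _), Nat.add_sub_cancel]
    rw [← ENNReal.ofReal_tsum_of_nonneg hc0 (hasSum_mul_one_sub_pow hc).summable,
      (hasSum_mul_one_sub_pow hc).tsum_eq, ENNReal.ofReal_one]
  have htotal := tsum_measure_setOf_eq hY (μ := μ)
  rw [tsum_eq_zero_add' ENNReal.summable, htail] at htotal
  simpa using htotal

lemma measure_pred_eq_of_geometric [IsProbabilityMeasure μ] {c : ℝ} (hc : c ∈ Set.Ioo 0 1)
    {Y : Ω → ℕ} (hY : Measurable Y)
    (hlaw : ∀ k, 1 ≤ k → μ {ω | Y ω = k} = ENNReal.ofReal (c * (1 - c) ^ (k - 1))) (i : ℕ) :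
    μ {ω | Y ω - 1 = i} = ENNReal.ofReal (c * (1 - c) ^ i) := by
  rcases i with _ | i
  · have hsplit : {ω | Y ω - 1 = 0} = {ω | Y ω = 0} ∪ {ω | Y ω = 1} := by
      ext ω
      simp only [Set.mem_ofPred_eq, Set.mem_union]
      omega
    rw [hsplit, measure_congr (union_ae_eq_right_of_ae_eq_empty
      (ae_eq_empty.mpr (measure_eq_zero_of_geometric hc hY hlaw))), hlaw 1 le_rfl]
  · have hshift : {ω | Y ω - 1 = i + 1} = {ω | Y ω = i + 2} := by
      ext ω
      simp only [Set.mem_ofPred_eq]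
      omega
    rw [hshift, hlaw _ (by omega)]
    rfl

lemma IndepFun.measure_add_eq_sum_antidiagonal {M : Type*} [AddMonoid M] [HasAntidiagonal M]
    [MeasurableSpace M] [MeasurableSingletonClass M] {Y Z : Ω → M}
    (hY : Measurable Y) (hZ : Measurable Z) (hYZ : IndepFun Y Z μ) (x : M) :
    μ {ω | Y ω + Z ω = x} = ∑ p ∈ antidiagonal x, μ {ω | Y ω = p.1} * μ {ω | Z ω = p.2} := by
  have hsplit : {ω | Y ω + Z ω = x}
      = ⋃ p ∈ antidiagonal x, ({ω | Y ω = p.1} ∩ {ω | Z ω = p.2}) := by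
    ext ω
    simp [HasAntidiagonal.mem_antidiagonal]
  rw [hsplit, measure_biUnion_finset]
  · exact sum_congr rfl fun p _ => hYZ.measure_inter_preimage_eq_mul {p.1} {p.2}
      (measurableSet_singleton _) (measurableSet_singleton _)
  · exact fun p _ q _ hpq => Set.disjoint_left.2 fun ω hωp hωq =>
      hpq (Prod.ext (hωp.1.symm.trans hωq.1) (hωp.2.symm.trans hωq.2))
  · exact fun p _ => (hY (measurableSet_singleton _)).inter (hZ (measurableSet_singleton _))

lemma Nat.sum_antidiagonal_multichoose (m j : ℕ) :
    ∑ p ∈ antidiagonal j, m.multichoose p.1 = (m + 1).multichoose j := by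
  rw [Nat.sum_antidiagonal_eq_sum_range_succ_mk, Nat.sum_range_multichoose, Nat.multichoose_eq,
    Nat.add_right_comm, Nat.add_sub_cancel, add_comm j m, Nat.choose_symm_add]

lemma iIndepFun.measure_sum_eq_multichoose {ι : Type*} {Y : ι → Ω → ℕ} (hind : iIndepFun Y μ)
    (hY : ∀ i, Measurable (Y i)) {c d : ℝ≥0∞} (hlaw : ∀ i k, μ {ω | Y i ω = k} = c * d ^ k)
    (s : Finset ι) (j : ℕ) :
    μ {ω | ∑ i ∈ s, Y i ω = j} = Nat.multichoose #s j * c ^ #s * d ^ j := by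
  classical
  have := hind.isProbabilityMeasure
  induction s using Finset.induction_on generalizing j with
  | empty => cases j <;> simp
  | insert i s hi ih =>
    have hsplit : {ω | ∑ n ∈ insert i s, Y n ω = j} = {ω | ∑ n ∈ s, Y n ω + Y i ω = j} := by
      simp_rw [sum_insert hi, add_comm]
    have hindep : IndepFun (fun ω => ∑ n ∈ s, Y n ω) (Y i) μ := by
      simpa only [← Finset.sum_apply] using hind.indepFun_finsetSum_of_notMem hY hi
    rw [hsplit, IndepFun.measure_add_eq_sum_antidiagonal (s.measurable_sum fun n _ => hY n) (hY i)
      hindep]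
    simp_rw [ih, hlaw]
    calc ∑ p ∈ antidiagonal j, Nat.multichoose #s p.1 * c ^ #s * d ^ p.1 * (c * d ^ p.2)
        = ∑ p ∈ antidiagonal j, (Nat.multichoose #s p.1 : ℝ≥0∞) * (c ^ (#s + 1) * d ^ j) :=
          sum_congr rfl fun p hp => by rw [← mem_antidiagonal.1 hp]; ring
      _ = _ := by
        rw [← sum_mul, ← Nat.cast_sum, Nat.sum_antidiagonal_multichoose, card_insert_of_notMem hi]
        ring

lemma iIndepFun.measure_sum_pred_eq_of_geometric {ι : Type*} {X : ι → Ω → ℕ}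
    (hind : iIndepFun X μ) (hX : ∀ i, Measurable (X i)) {c : ℝ} (hc : c ∈ Set.Ioo 0 1)
    (hlaw : ∀ i k, 1 ≤ k → μ {ω | X i ω = k} = ENNReal.ofReal (c * (1 - c) ^ (k - 1)))
    (s : Finset ι) (j : ℕ) :
    μ {ω | ∑ i ∈ s, (X i ω - 1) = j}
      = ENNReal.ofReal (Nat.multichoose #s j * c ^ #s * (1 - c) ^ j) := by
  have := hind.isProbabilityMeasure
  have hc' : 0 ≤ 1 - c := by linarith [hc.2]
  have hpred : ∀ i k, μ {ω | X i ω - 1 = k} = ENNReal.ofReal c * ENNReal.ofReal (1 - c) ^ k :=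
    fun i k => by
      rw [measure_pred_eq_of_geometric hc (hX i) (hlaw i) k, ENNReal.ofReal_mul hc.1.le,
        ENNReal.ofReal_pow hc']
  have hind' : iIndepFun (fun i ω => X i ω - 1) μ :=
    hind.comp (fun _ x => x - 1) fun _ => measurable_of_countable _
  rw [iIndepFun.measure_sum_eq_multichoose hind' (fun i => (hX i).sub_const 1) hpred s j,
    ENNReal.ofReal_mul (mul_nonneg (Nat.cast_nonneg _) (pow_nonneg hc.1.le _)),
    ENNReal.ofReal_mul (Nat.cast_nonneg _), ENNReal.ofReal_natCast, ENNReal.ofReal_pow hc.1.le,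
    ENNReal.ofReal_pow hc']

lemma measure_randomIndex_mem_eq_tsum {α : Type*} [MeasurableSpace α] {N : Ω → ℕ}
    {T : ℕ → Ω → α} (hN : Measurable N) (hT : ∀ m, Measurable (T m))
    (hind : ∀ m, IndepFun N (T m) μ) {s : Set α} (hs : MeasurableSet s) :
    μ {ω | T (N ω) ω ∈ s} = ∑' m, μ {ω | N ω = m} * μ {ω | T m ω ∈ s} := by
  have hsplit : {ω | T (N ω) ω ∈ s} = ⋃ m, ({ω | N ω = m} ∩ {ω | T m ω ∈ s}) := by
    ext ω
    simp
  rw [hsplit, measure_iUnion]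
  · exact tsum_congr fun m =>
      (hind m).measure_inter_preimage_eq_mul {m} s (measurableSet_singleton m) hs
  · exact fun m m' hmm' => Set.disjoint_left.2 fun ω hm hm' => hmm' (hm.1.symm.trans hm'.1)
  · exact fun m => (hN (measurableSet_singleton m)).inter (hT m hs)

lemma iIndepFun.indepFun_optionElim_finset {ι β : Type*} [MeasurableSpace β] {N : Ω → β}
    {X : ι → Ω → β} (h : iIndepFun (fun i : Option ι => Option.elim i N X) μ)
    (hN : Measurable N) (hX : ∀ i, Measurable (X i)) (s : Finset ι) {γ : Type*}
    [MeasurableSpace γ] {φ : (s → β) → γ} (hφ : Measurable φ) :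
    IndepFun N (fun ω => φ fun i => X i ω) μ := by
  have h' := h.indepFun_finset {none} (s.map Function.Embedding.some) (by simp)
    (by rintro (_ | i); exacts [hN, hX i])
  have hhead : Measurable fun v : ({none} : Finset (Option ι)) → β =>
      v ⟨none, mem_singleton_self none⟩ :=
    measurable_pi_apply _
  have htail : Measurable fun (v : s.map Function.Embedding.some → β) (i : s) =>
      v ⟨some i, mem_map_of_mem _ i.2⟩ :=
    measurable_pi_lambda _ fun i => measurable_pi_apply _
  exact h'.comp hhead (hφ.comp htail)

lemma hasSum_geometric_mul_negBinomial {a b : ℝ} (hab : |(1 - a) * b| < 1) (j : ℕ) :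
    HasSum (fun m : ℕ => a * (1 - a) ^ m * ((m + 1).multichoose j * b ^ (m + 1) * (1 - b) ^ j))
      (a * b / (1 - b + a * b) * (1 - a * b / (1 - b + a * b)) ^ j) := by
  have hD : 0 < 1 - b + a * b := by
    have := (abs_lt.1 hab).2
    linarith
  have hterm : ∀ m : ℕ, a * (1 - a) ^ m * ((m + 1).multichoose j * b ^ (m + 1) * (1 - b) ^ j)
      = a * b * (1 - b) ^ j * ((m + j).choose j * ((1 - a) * b) ^ m) := fun m => by
    rw [Nat.multichoose_eq, Nat.add_right_comm, Nat.add_sub_cancel, mul_pow]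
    ring
  have hvalue : a * b / (1 - b + a * b) * (1 - a * b / (1 - b + a * b)) ^ j
      = a * b * (1 - b) ^ j * (1 / (1 - (1 - a) * b) ^ (j + 1)) := by
    have hcompl : 1 - a * b / (1 - b + a * b) = (1 - b) / (1 - b + a * b) := by
      field_simp
      ring
    rw [hcompl, show 1 - (1 - a) * b = 1 - b + a * b by ring, div_pow, pow_succ]
    field_simp
  have hr : ‖(1 - a) * b‖ < 1 := by rwa [Real.norm_eq_abs]
  rw [hvalue]
  simp_rw [hterm]
  exact (hasSum_choose_mul_geometric_of_norm_lt_one j hr).mul_left _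

lemma tsum_ofReal_geometric_mul_negBinomial {a b : ℝ} (ha : a ∈ Set.Ioo 0 1)
    (hb : b ∈ Set.Ioo 0 1) (j : ℕ) :
    ∑' m : ℕ, ENNReal.ofReal (a * (1 - a) ^ m)
        * ENNReal.ofReal ((m + 1).multichoose j * b ^ (m + 1) * (1 - b) ^ j)
      = ENNReal.ofReal (a * b / (1 - b + a * b) * (1 - a * b / (1 - b + a * b)) ^ j) := by
  obtain ⟨ha0, ha1⟩ := ha
  obtain ⟨hb0, hb1⟩ := hb
  have hsum := hasSum_geometric_mul_negBinomial (a := a) (b := b) (j := j) (by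
    rw [abs_lt]
    constructor <;> nlinarith)
  have hgeom : ∀ m : ℕ, 0 ≤ a * (1 - a) ^ m := fun m =>
    mul_nonneg ha0.le (pow_nonneg (by linarith) m)
  have hnegBin : ∀ m : ℕ, 0 ≤ ((m + 1).multichoose j : ℝ) * b ^ (m + 1) * (1 - b) ^ j := fun m =>
    mul_nonneg (mul_nonneg (Nat.cast_nonneg _) (pow_nonneg hb0.le _)) (pow_nonneg (by linarith) j)
  simp_rw [← ENNReal.ofReal_mul (hgeom _)]
  rw [← ENNReal.ofReal_tsum_of_nonneg (fun m => mul_nonneg (hgeom m) (hnegBin m)) hsum.summable,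
    hsum.tsum_eq]

end

/-- **A geometric sum of i.i.d. geometric variables is geometric.**
Let `N` be a geometric random variable with parameter `a ∈ (0,1)` (i.e. taking values in
the positive integers, with `P(N = k) = a * (1-a)^(k-1)` for every `k ≥ 1`), and let
`(X n)` be i.i.d. geometric random variables with parameter `b ∈ (0,1)`, with the whole
family `N, X 0, X 1, …` independent.  Then `S = 1 + ∑_{n=1}^{N} (X n - 1)` is geometric
with parameter `a*b / (1 - b + a*b)`. -/
theorem geometric_sum_of_geometrics
    {Ω : Type*} [MeasurableSpace Ω] (μ : Measure Ω) [IsProbabilityMeasure μ]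
    (a b : ℝ) (ha : a ∈ Set.Ioo (0:ℝ) 1) (hb : b ∈ Set.Ioo (0:ℝ) 1)
    (N : Ω → ℕ) (X : ℕ → Ω → ℕ)
    (hNmeas : Measurable N) (hXmeas : ∀ n, Measurable (X n))
    (hN : ∀ k : ℕ, 1 ≤ k → μ {ω | N ω = k} = ENNReal.ofReal (a * (1 - a) ^ (k - 1)))
    (hX : ∀ n, ∀ k : ℕ, 1 ≤ k →
      μ {ω | X n ω = k} = ENNReal.ofReal (b * (1 - b) ^ (k - 1)))
    (hindep : iIndepFun (m := fun _ : Option ℕ => inferInstance)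
      (fun i : Option ℕ => Option.elim i N X) μ) :
    ∀ k : ℕ, 1 ≤ k →
      μ {ω | 1 + ∑ n ∈ Finset.Icc 1 (N ω), (X n ω - 1) = k}
        = ENNReal.ofReal
            ((a * b / (1 - b + a * b)) * (1 - a * b / (1 - b + a * b)) ^ (k - 1)) := by
  intro k hk
  obtain ⟨j, rfl⟩ := Nat.exists_eq_add_of_le' hk
  let T : ℕ → Ω → ℕ := fun m ω => ∑ n ∈ Icc 1 m, (X n ω - 1)
  have hTmeas : ∀ m, Measurable (T m) := fun m =>
    Finset.measurable_sum _ fun n _ => (hXmeas n).sub_const 1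
  have hTind : ∀ m, IndepFun N (T m) μ := fun m => by
    convert iIndepFun.indepFun_optionElim_finset hindep hNmeas hXmeas (Icc 1 m)
      (measurable_of_countable fun v => ∑ i, (v i - 1)) using 2 with ω
    exact (sum_coe_sort (Icc 1 m) fun n => X n ω - 1).symm
  have hTlaw : ∀ m, μ {ω | T m ω = j}
      = ENNReal.ofReal (m.multichoose j * b ^ m * (1 - b) ^ j) := fun m => by
    simpa using iIndepFun.measure_sum_pred_eq_of_geometric
      (iIndepFun.precomp (Option.some_injective ℕ) hindep) hXmeas hb hX (Icc 1 m) j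
  calc μ {ω | 1 + ∑ n ∈ Icc 1 (N ω), (X n ω - 1) = j + 1}
      = μ {ω | T (N ω) ω ∈ ({j} : Set ℕ)} := by
        congr 1
        ext ω
        simp only [T, Set.mem_ofPred_eq, Set.mem_singleton_iff]
        omega
    _ = ∑' m, μ {ω | N ω = m} * μ {ω | T m ω ∈ ({j} : Set ℕ)} :=
        measure_randomIndex_mem_eq_tsum hNmeas hTmeas hTind (measurableSet_singleton j)
    _ = ∑' m, μ {ω | N ω = m + 1} * μ {ω | T (m + 1) ω = j} := by
        rw [tsum_eq_zero_add' ENNReal.summable, measure_eq_zero_of_geometric ha hNmeas hN,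
          zero_mul, zero_add]
        rfl
    _ = _ := by
        simp_rw [hN _ (Nat.le_add_left 1 _), hTlaw, Nat.add_sub_cancel]
        exact tsum_ofReal_geometric_mul_negBinomial ha hb j
end

section
/- For every finite undirected simple graph G = (V, E) with no isolated vertex, there exists a partition of V into sets each of cardinality 2 or 3 and of diameter at most 2 for the graph distance on G (i.e., any two vertices in the same part are at graph distance at most 2 in G). -/
open Finset




private lemma chop_aux {V : Type*} [DecidableEq V] : ∀ (n : ℕ) (s : Finset V), s.card ≤ n → 2 ≤ s.card →
    ∃ P : Finpartition s, ∀ p ∈ P.parts, p.card = 2 ∨ p.card = 3 := by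
  intro n
  induction n with
  | zero => intro s h h2; omega
  | succ n ih =>
    intro s hle h2
    by_cases h3 : s.card ≤ 3
    · refine ⟨Finpartition.indiscrete (fun h => by simp [h] at h2), ?_⟩
      intro p hp
      rw [Finpartition.indiscrete_parts, mem_singleton] at hp
      subst hp; omega
    · have hne : s.Nonempty := card_pos.mp (by omega)
      obtain ⟨x, hx⟩ := hne
      have hne2 : (s.erase x).Nonempty := card_pos.mp (show 0 < (s.erase x).card by rw [card_erase_of_mem hx]; omega)
      obtain ⟨y, hy⟩ := hne2
      have hyx : y ≠ x := ne_of_mem_erase hy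
      have hys : y ∈ s := mem_of_mem_erase hy
      set b : Finset V := {x, y} with hb
      have hbs : b ⊆ s := by intro z hz; rcases mem_insert.mp hz with rfl | hz; · exact hx
                             · rw [mem_singleton] at hz; exact hz ▸ hys
      have hcardb : b.card = 2 := by rw [hb, card_insert_of_notMem (by simp [hyx.symm]), card_singleton]
      have hdisj : Disjoint (s \ b) b := sdiff_disjoint
      have hcard' : (s \ b).card = s.card - 2 := by rw [card_sdiff_of_subset hbs, hcardb]
      obtain ⟨P, hP⟩ := ih (s \ b) (by omega) (by omega)
      refine ⟨P.extend (by simp [hb, bot_eq_empty, Finset.insert_ne_empty]) hdisj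
        (by rw [sup_eq_union, sdiff_union_of_subset hbs]), ?_⟩
      intro p hp
      rw [Finpartition.extend_parts, mem_insert] at hp
      rcases hp with rfl | hp
      · left; exact hcardb
      · exact hP p hp




private lemma star_step {V : Type*} [Fintype V] [DecidableEq V] (G : SimpleGraph V)
    {t : Finset V} {f : V → V}
    (I0 : ∀ x, x ∉ t → f x = x)
    (I1 : ∀ x ∈ t, f x ∈ t)
    (I2 : ∀ x, f (f x) = f x)
    (I3 : ∀ x, f x ≠ x → G.Adj (f x) x)
    (I4 : ∀ x ∈ t, ∃ u, u ≠ f x ∧ f u = f x)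
    {v : V} (hv : v ∉ t) {w : V} (hvw : G.Adj v w) :
    ∃ (t' : Finset V) (f' : V → V), insert v t ⊆ t' ∧
      (∀ x, x ∉ t' → f' x = x) ∧ (∀ x ∈ t', f' x ∈ t') ∧
      (∀ x, f' (f' x) = f' x) ∧ (∀ x, f' x ≠ x → G.Adj (f' x) x) ∧
      (∀ x ∈ t', ∃ u, u ≠ f' x ∧ f' u = f' x) := by
  have hwv : w ≠ v := hvw.ne'
  have hvnw : v ≠ w := hvw.ne
  have hfv : f v = v := I0 v hv
  have hfin : ∀ x, f x ∈ t → x ∈ t := by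
    intro x hfx
    by_contra hx
    rw [I0 x hx] at hfx
    exact hx hfx
  have hfnv : ∀ x, x ≠ v → f x ≠ v := by
    intro x hx
    by_cases hxt : x ∈ t
    · exact fun h => hv (h ▸ I1 x hxt)
    · rw [I0 x hxt]; exact hx
  have hmemnv : ∀ x, x ∈ t → x ≠ v := fun x hx h => hv (h ▸ hx)
  by_cases hcw : f w = w
  · -- w is a center or fresh vertex
    refine ⟨insert v (insert w t), fun x => if x = v then w else f x, ?_, ?_, ?_, ?_, ?_, ?_⟩ <;>
      beta_reduce
    · intro x hx
      rcases mem_insert.mp hx with rfl | hx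
      · exact mem_insert_self _ _
      · exact mem_insert_of_mem (mem_insert_of_mem hx)
    · intro x hx
      rw [if_neg, I0]
      · exact fun h => hx (mem_insert_of_mem (mem_insert_of_mem h))
      · rintro rfl; exact hx (mem_insert_self _ _)
    · intro x hx
      by_cases hxv : x = v
      · rw [if_pos hxv]
        exact mem_insert_of_mem (mem_insert_self _ _)
      · rw [if_neg hxv]
        rcases mem_insert.mp hx with rfl | hx
        · exact absurd rfl hxv
        rcases mem_insert.mp hx with rfl | hx
        · rw [hcw]; exact mem_insert_of_mem (mem_insert_self _ _)
        · exact mem_insert_of_mem (mem_insert_of_mem (I1 x hx))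
    · intro x
      by_cases hxv : x = v
      · rw [if_pos hxv, if_neg hwv, hcw]
      · rw [if_neg hxv, if_neg (hfnv x hxv)]; exact I2 x
    · intro x hne
      by_cases hxv : x = v
      · subst hxv
        rw [if_pos rfl] at hne ⊢
        exact hvw.symm
      · rw [if_neg hxv] at hne ⊢
        exact I3 x hne
    · intro x hx
      rcases mem_insert.mp hx with rfl | hx
      · exact ⟨x, by rw [if_pos rfl]; exact hvnw, rfl⟩
      rcases mem_insert.mp hx with rfl | hx
      · refine ⟨v, ?_, ?_⟩
        · rw [if_neg hwv, hcw]; exact hvnw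
        · rw [if_pos rfl, if_neg hwv, hcw]
      · obtain ⟨u, hu1, hu2⟩ := I4 x hx
        have hut : u ∈ t := hfin u (hu2 ▸ I1 x hx)
        refine ⟨u, ?_, ?_⟩
        · rw [if_neg (hmemnv x hx)]; exact hu1
        · rw [if_neg (hmemnv u hut), if_neg (hmemnv x hx)]; exact hu2
  · -- w is a leaf: c := f w ≠ w
    have hwt : w ∈ t := by by_contra h; exact hcw (I0 w h)
    have hct : f w ∈ t := I1 w hwt
    have hfc : f (f w) = f w := I2 w
    have hcnv : f w ≠ v := hmemnv _ hct
    have hAdjcw : G.Adj (f w) w := I3 w hcw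
    have hfnw : ∀ x, f x ≠ w := by
      intro x h
      exact hcw (by rw [← h, I2])
    by_cases hx0 : ∃ x0, x0 ≠ w ∧ x0 ≠ f w ∧ f x0 = f w
    · -- big fiber: detach w as new center of {v, w}
      obtain ⟨x0, hx0w, hx0c, hx0f⟩ := hx0
      have hx0t : x0 ∈ t := hfin x0 (hx0f ▸ hct)
      have hx0v : x0 ≠ v := hmemnv x0 hx0t
      refine ⟨insert v t, fun x => if x = v ∨ x = w then w else f x, subset_rfl,
        ?_, ?_, ?_, ?_, ?_⟩ <;> beta_reduce
      · intro x hx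
        have hxv : x ≠ v := fun h => hx (h ▸ mem_insert_self _ _)
        have hxt : x ∉ t := fun h => hx (mem_insert_of_mem h)
        have hxw : x ≠ w := fun h => hxt (h ▸ hwt)
        rw [if_neg (not_or.mpr ⟨hxv, hxw⟩)]
        exact I0 x hxt
      · intro x hx
        by_cases h : x = v ∨ x = w
        · rw [if_pos h]; exact mem_insert_of_mem hwt
        · rw [if_neg h]
          rcases mem_insert.mp hx with rfl | hxt
          · exact absurd (Or.inl rfl) h
          · exact mem_insert_of_mem (I1 x hxt)
      · intro x
        by_cases h : x = v ∨ x = w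
        · rw [if_pos h, if_pos (Or.inr rfl)]
        · rw [if_neg h]
          push_neg at h
          rw [if_neg (not_or.mpr ⟨hfnv x h.1, hfnw x⟩)]
          exact I2 x
      · intro x hne
        by_cases hxv : x = v
        · subst hxv
          rw [if_pos (Or.inl rfl)] at hne ⊢
          exact hvw.symm
        · by_cases hxw : x = w
          · subst hxw
            rw [if_pos (Or.inr rfl)] at hne
            exact absurd rfl hne
          · rw [if_neg (not_or.mpr ⟨hxv, hxw⟩)] at hne ⊢
            exact I3 x hne
      · intro x hx
        by_cases h : x = v ∨ x = w
        · refine ⟨v, ?_, ?_⟩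
          · rw [if_pos h]; exact hvnw
          · rw [if_pos (Or.inl rfl), if_pos h]
        · push_neg at h
          have hxt : x ∈ t := by
            rcases mem_insert.mp hx with rfl | hxt
            · exact absurd rfl h.1
            · exact hxt
          rw [if_neg (not_or.mpr ⟨h.1, h.2⟩)]
          by_cases hfx : f x = f w
          · refine ⟨x0, ?_, ?_⟩
            · rw [hfx]; exact hx0c
            · rw [if_neg (not_or.mpr ⟨hx0v, hx0w⟩), hx0f, hfx]
          · obtain ⟨u, hu1, hu2⟩ := I4 x hxt
            have hut : u ∈ t := hfin u (hu2 ▸ I1 x hxt)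
            have huw : u ≠ w := fun h' => hfx (by rw [← hu2, h'])
            refine ⟨u, hu1, ?_⟩
            rw [if_neg (not_or.mpr ⟨hmemnv u hut, huw⟩)]
            exact hu2
    · -- fiber of c is exactly {c, w}: merge into {v, w, c} with center w
      push_neg at hx0
      have hfib : ∀ x, x ≠ w → x ≠ f w → f x ≠ f w := hx0
      refine ⟨insert v t, fun x => if x = v ∨ x = w ∨ x = f w then w else f x, subset_rfl,
        ?_, ?_, ?_, ?_, ?_⟩ <;> beta_reduce
      · intro x hx
        have hxv : x ≠ v := fun h => hx (h ▸ mem_insert_self _ _)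
        have hxt : x ∉ t := fun h => hx (mem_insert_of_mem h)
        have hxw : x ≠ w := fun h => hxt (h ▸ hwt)
        have hxc : x ≠ f w := fun h => hxt (h ▸ hct)
        rw [if_neg (not_or.mpr ⟨hxv, not_or.mpr ⟨hxw, hxc⟩⟩)]
        exact I0 x hxt
      · intro x hx
        by_cases h : x = v ∨ x = w ∨ x = f w
        · rw [if_pos h]; exact mem_insert_of_mem hwt
        · rw [if_neg h]
          rcases mem_insert.mp hx with rfl | hxt
          · exact absurd (Or.inl rfl) h
          · exact mem_insert_of_mem (I1 x hxt)
      · intro x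
        by_cases h : x = v ∨ x = w ∨ x = f w
        · rw [if_pos h, if_pos (Or.inr (Or.inl rfl))]
        · rw [if_neg h]
          push_neg at h
          rw [if_neg (not_or.mpr ⟨hfnv x h.1, not_or.mpr ⟨hfnw x, hfib x h.2.1 h.2.2⟩⟩)]
          exact I2 x
      · intro x hne
        by_cases hxv : x = v
        · subst hxv
          rw [if_pos (Or.inl rfl)] at hne ⊢
          exact hvw.symm
        · by_cases hxw : x = w
          · subst hxw
            rw [if_pos (Or.inr (Or.inl rfl))] at hne
            exact absurd rfl hne
          · by_cases hxc : x = f w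
            · subst hxc
              rw [if_pos (Or.inr (Or.inr rfl))] at hne ⊢
              exact hAdjcw.symm
            · rw [if_neg (not_or.mpr ⟨hxv, not_or.mpr ⟨hxw, hxc⟩⟩)] at hne ⊢
              exact I3 x hne
      · intro x hx
        by_cases h : x = v ∨ x = w ∨ x = f w
        · refine ⟨v, ?_, ?_⟩
          · rw [if_pos h]; exact hvnw
          · rw [if_pos (Or.inl rfl), if_pos h]
        · push_neg at h
          have hxt : x ∈ t := by
            rcases mem_insert.mp hx with rfl | hxt
            · exact absurd rfl h.1
            · exact hxt
          rw [if_neg (not_or.mpr ⟨h.1, not_or.mpr ⟨h.2.1, h.2.2⟩⟩)]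
          have hfx : f x ≠ f w := hfib x h.2.1 h.2.2
          obtain ⟨u, hu1, hu2⟩ := I4 x hxt
          have hut : u ∈ t := hfin u (hu2 ▸ I1 x hxt)
          have huw : u ≠ w := fun h' => hfx (by rw [← hu2, h'])
          have huc : u ≠ f w := fun h' => hfx (by rw [← hu2, h', hfc])
          refine ⟨u, hu1, ?_⟩
          rw [if_neg (not_or.mpr ⟨hmemnv u hut, not_or.mpr ⟨huw, huc⟩⟩)]
          exact hu2

private lemma exists_star_fn {V : Type*} [Fintype V] [DecidableEq V] (G : SimpleGraph V)
    (hG : ∀ v : V, ∃ w : V, G.Adj v w) :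
    ∃ f : V → V, (∀ x, f (f x) = f x) ∧ (∀ x, f x ≠ x → G.Adj (f x) x) ∧
      (∀ x, ∃ u, u ≠ f x ∧ f u = f x) := by
  suffices key : ∀ (n : ℕ) (t : Finset V) (f : V → V), tᶜ.card ≤ n →
      (∀ x, x ∉ t → f x = x) → (∀ x ∈ t, f x ∈ t) → (∀ x, f (f x) = f x) →
      (∀ x, f x ≠ x → G.Adj (f x) x) → (∀ x ∈ t, ∃ u, u ≠ f x ∧ f u = f x) →
      ∃ f : V → V, (∀ x, f (f x) = f x) ∧ (∀ x, f x ≠ x → G.Adj (f x) x) ∧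
        (∀ x, ∃ u, u ≠ f x ∧ f u = f x) by
    exact key ((∅ : Finset V)ᶜ).card ∅ id le_rfl (fun _ _ => rfl) (by simp) (fun _ => rfl)
      (fun x h => absurd rfl h) (by simp)
  intro n
  induction n with
  | zero =>
    intro t f hcard I0 I1 I2 I3 I4
    have ht : t = univ := by
      have : tᶜ = ∅ := card_eq_zero.mp (Nat.le_zero.mp hcard)
      rwa [compl_eq_empty_iff] at this
    exact ⟨f, I2, I3, fun x => I4 x (ht ▸ mem_univ x)⟩
  | succ n ih =>
    intro t f hcard I0 I1 I2 I3 I4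
    by_cases ht : t = univ
    · exact ⟨f, I2, I3, fun x => I4 x (ht ▸ mem_univ x)⟩
    · obtain ⟨v, hv⟩ : ∃ v, v ∉ t := by
        by_contra h
        push_neg at h
        exact ht (eq_univ_iff_forall.mpr h)
      obtain ⟨w, hvw⟩ := hG v
      obtain ⟨t', f', hsub, J0, J1, J2, J3, J4⟩ := star_step G I0 I1 I2 I3 I4 hv hvw
      refine ih t' f' ?_ J0 J1 J2 J3 J4
      have h1 : t'ᶜ ⊆ tᶜ.erase v := by
        rw [← compl_insert]
        exact compl_subset_compl.mpr hsub
      have h2 := card_le_card h1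
      rw [card_erase_of_mem (mem_compl.mpr hv)] at h2
      have h3 : 0 < tᶜ.card := card_pos.mpr ⟨v, mem_compl.mpr hv⟩
      omega
/-- **Pairing vertices in a graph with no isolated vertex.**
For every finite undirected simple graph `G` with no isolated vertex, there exists a
partition of the vertex set into parts of cardinality 2 or 3, each of diameter at most 2
for the graph distance (any two vertices of a part are at graph distance at most 2). -/
theorem partition_pairs_triples_of_no_isolated
    {V : Type*} [Fintype V] [DecidableEq V] (G : SimpleGraph V)
    (hG : ∀ v : V, ∃ w : V, G.Adj v w) :
    ∃ P : Finpartition (Finset.univ : Finset V),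
      ∀ s ∈ P.parts, (s.card = 2 ∨ s.card = 3) ∧
        ∀ x ∈ s, ∀ y ∈ s, G.edist x y ≤ 2 := by
  obtain ⟨f, F1, F2, F3⟩ := exists_star_fn G hG
  set std : Setoid V := ⟨fun a b => f a = f b,
    ⟨fun _ => rfl, Eq.symm, Eq.trans⟩⟩ with hstd
  haveI : DecidableRel std.r := fun a b => inferInstanceAs (Decidable (f a = f b))
  set P0 : Finpartition (univ : Finset V) := Finpartition.ofSetoid std with hP0
  have hparts : ∀ A ∈ P0.parts, 2 ≤ A.card ∧ ∀ x ∈ A, ∀ y ∈ A, G.edist x y ≤ 2 := by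
    intro A hA
    have hA' : A ∈ univ.image fun a => ({b | std.r a b} : Finset V) := hA
    rw [mem_image] at hA'
    obtain ⟨a, -, rfl⟩ := hA'
    have hmem : ∀ b, b ∈ ({b | std.r a b} : Finset V) ↔ f a = f b := by
      intro b
      simp [hstd, Finset.mem_filter]
    constructor
    · obtain ⟨u, hu1, hu2⟩ := F3 a
      exact one_lt_card.mpr ⟨f a, (hmem (f a)).mpr (F1 a).symm,
        u, (hmem u).mpr hu2.symm, hu1.symm⟩
    · intro x hx y hy
      rw [hmem] at hx hy
      have hdist : ∀ z : V, f z = f a → G.edist z (f a) ≤ 1 := by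
        intro z hz
        rcases eq_or_ne (f z) z with h | h
        · rw [← hz, h]
          simp [SimpleGraph.edist_self]
        · rw [← hz, SimpleGraph.edist_comm]
          exact le_of_eq (SimpleGraph.edist_eq_one_iff_adj.mpr (F2 z h))
      calc G.edist x y ≤ G.edist x (f a) + G.edist (f a) y := SimpleGraph.edist_triangle
        _ ≤ 1 + 1 := add_le_add (hdist x hx.symm)
            (by rw [SimpleGraph.edist_comm]; exact hdist y hy.symm)
        _ = 2 := by norm_num
  choose Q hQ using fun (A : Finset V) (h : 2 ≤ A.card) => chop_aux A.card A le_rfl h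
  refine ⟨P0.bind fun A hA => Q A (hparts A hA).1, ?_⟩
  intro s hs
  rw [Finpartition.mem_bind] at hs
  obtain ⟨A, hA, hsA⟩ := hs
  refine ⟨hQ A (hparts A hA).1 s hsA, ?_⟩
  intro x hx y hy
  have hsub : s ⊆ A := (Q A (hparts A hA).1).le hsA
  exact (hparts A hA).2 x (hsub hx) y (hsub hy)
end

section
/- For every finite connected undirected simple graph G = (V, E) with |V| ≥ 2, there exists a partition of V into sets each of cardinality 2 or 3 and of diameter at most 2 for the graph distance on G (i.e., any two vertices in the same part are at graph distance at most 2 in G). -/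
/-!
Induct on a vertex set `s` inducing a connected subgraph. If `s` has diameter at most 2 in the
induced graph, any partition of `s` into pairs and triples works. Otherwise breadth-first layers
from a root `r` give a removable pair: a deepest vertex `v` together with either another deepest
neighbour of the parent `u` of `v`, or `u` itself. Both lie within distance 2 of each other, and
no other vertex needs them on a shortest path to `r`, so the rest of `s` stays connected.
-/

open Finset SimpleGraph

namespace Finpartition

variable {α : Type*} [DecidableEq α]

theorem exists_forall_parts_of_sdiff {p : Finset α → Prop} {s t : Finset α} (hts : t ⊆ s)
    (ht : t.Nonempty) (hpt : p t) (hrest : ∃ P : Finpartition (s \ t), ∀ u ∈ P.parts, p u) :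
    ∃ P : Finpartition s, ∀ u ∈ P.parts, p u := by
  obtain ⟨P, hP⟩ := hrest
  refine ⟨P.extend ht.ne_empty sdiff_disjoint (sdiff_union_of_subset hts), fun u hu => ?_⟩
  rw [extend_parts, mem_insert] at hu
  rcases hu with rfl | hu
  exacts [hpt, hP u hu]

end Finpartition

namespace Finset

variable {α : Type*} [DecidableEq α]

theorem exists_finpartition_card_two_or_three {s : Finset α} (hs : 2 ≤ #s) :
    ∃ P : Finpartition s, ∀ t ∈ P.parts, #t = 2 ∨ #t = 3 := by
  induction s using Finset.strongInduction with | H s ih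
  by_cases hs3 : #s ≤ 3
  · have hne : s ≠ ∅ := by rintro rfl; simp at hs
    refine ⟨.indiscrete hne, fun t ht => ?_⟩
    rw [Finpartition.indiscrete_parts, mem_singleton] at ht
    rw [ht]
    omega
  · obtain ⟨t, hts, ht⟩ := exists_subset_card_eq hs
    refine Finpartition.exists_forall_parts_of_sdiff hts (card_pos.mp (by omega)) (Or.inl ht)
      (ih _ (sdiff_ssubset hts (card_pos.mp (by omega))) ?_)
    rw [card_sdiff_of_subset hts]
    omega

end Finset

namespace SimpleGraph

variable {V W : Type*} {G : SimpleGraph V} {H : SimpleGraph W}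

theorem Hom.edist_le (f : H →g G) (x y : W) : G.edist (f x) (f y) ≤ H.edist x y := by
  by_cases hxy : H.Reachable x y
  · obtain ⟨p, hp⟩ := hxy.exists_walk_length_eq_edist
    rw [← hp, ← Walk.length_map f]
    exact (p.map f).edist_le
  · rw [edist_eq_top_of_not_reachable hxy]
    exact le_top

theorem Connected.dist_lt_card [Fintype V] (hG : G.Connected) (x y : V) :
    G.dist x y < Fintype.card V := by
  obtain ⟨p, hp, hlen⟩ := hG.exists_path_of_dist x y
  exact hlen ▸ hp.length_lt

theorem Walk.dist_add_dist_le_of_mem_support {x y z : V} (p : G.Walk x y)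
    (hp : p.length = G.dist x y) (hz : z ∈ p.support) :
    G.dist x z + G.dist z y ≤ G.dist x y := by
  classical
  have hsplit := congrArg Walk.length (p.take_spec hz)
  rw [Walk.length_append] at hsplit
  have := dist_le (p.takeUntil z hz)
  have := dist_le (p.dropUntil z hz)
  omega

theorem Reachable.exists_adj_dist_add_one_eq {x y : V} (hxy : G.Reachable x y) (hne : x ≠ y) :
    ∃ z, G.Adj x z ∧ G.dist z y + 1 = G.dist x y := by
  obtain ⟨p, hp⟩ := hxy.exists_walk_length_eq_dist
  obtain ⟨z, hxz, q, rfl⟩ := p.exists_eq_cons_of_ne hne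
  refine ⟨z, hxz, le_antisymm ?_ ?_⟩
  · have := dist_le q
    simp only [Walk.length_cons] at hp
    omega
  · have := hxz.reachable.dist_triangle_left y
    rw [dist_eq_one_iff_adj.mpr hxz] at this
    omega

theorem Connected.induce_compl_connected_of_forall_dist_lt (hG : G.Connected) {t : Set V}
    {r : V} (hr : r ∉ t) (ht : ∀ x ∉ t, ∀ z ∈ t, G.dist r x < G.dist r z + G.dist z x) :
    (G.induce tᶜ).Connected := by
  refine G.induce_connected_of_patches r hr fun {x} hx => ?_
  obtain ⟨p, hp⟩ := hG.exists_walk_length_eq_dist r x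
  have hsupp : {z | z ∈ p.support} ⊆ tᶜ := fun z hz hzt => by
    have := p.dist_add_dist_le_of_mem_support hp hz
    have := ht x hx z hzt
    omega
  exact ⟨_, hsupp, p.start_mem_support, p.end_mem_support,
    p.connected_induce_support.preconnected _ _⟩

theorem Connected.induce_image_val {s : Set V} {t : Set s} (h : ((G.induce s).induce t).Connected) :
    (G.induce (Subtype.val '' t)).Connected :=
  h.map (induceHom (Embedding.induce s).toHom (Set.mapsTo_image _ _))
    ((Set.MapsTo.restrict_surjective_iff (Set.mapsTo_image _ _)).mpr (Set.surjOn_image _ _))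

theorem Connected.exists_close_pair_induce_compl_connected_of_deepest (hG : G.Connected)
    {r u v : V} (hv : ∀ x, G.dist r x ≤ G.dist r v) (hD : 2 ≤ G.dist r v) (hvu : G.Adj v u)
    (hu : G.dist r u + 1 = G.dist r v) :
    ∃ a b, a ≠ b ∧ G.dist a b ≤ 2 ∧ (G.induce ({a, b}ᶜ : Set V)).Connected := by
  set D := G.dist r v
  have hne_root : ∀ z, G.dist r z ≠ 0 → r ≠ z := by
    rintro z hz rfl
    simp at hz
  have hdeepest : ∀ x z, x ≠ z → G.dist r z = D → G.dist r x < G.dist r z + G.dist z x := by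
    intro x z hxz hz
    have := hG.pos_dist_of_ne hxz.symm
    have := hv x
    omega
  by_cases hc : ∃ c, c ≠ v ∧ G.Adj u c ∧ G.dist r c = D
  · obtain ⟨c, hcv, huc, hc⟩ := hc
    refine ⟨v, c, hcv.symm, ?_, hG.induce_compl_connected_of_forall_dist_lt (r := r) ?_ ?_⟩
    · have := hG.dist_triangle (u := v) (v := u) (w := c)
      rwa [dist_eq_one_iff_adj.mpr hvu, dist_eq_one_iff_adj.mpr huc] at this
    · simp only [Set.mem_insert_iff, Set.mem_singleton_iff, not_or]
      exact ⟨hne_root v (by omega), hne_root c (by omega)⟩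
    · intro x hx z hz
      simp only [Set.mem_insert_iff, Set.mem_singleton_iff, not_or] at hx hz
      rcases hz with rfl | rfl
      exacts [hdeepest x _ hx.1 rfl, hdeepest x _ hx.2 hc]
  · refine ⟨v, u, hvu.ne, (dist_eq_one_iff_adj.mpr hvu).trans_le one_le_two,
      hG.induce_compl_connected_of_forall_dist_lt (r := r) ?_ ?_⟩
    · simp only [Set.mem_insert_iff, Set.mem_singleton_iff, not_or]
      exact ⟨hne_root v (by omega), hne_root u (by omega)⟩
    · intro x hx z hz
      simp only [Set.mem_insert_iff, Set.mem_singleton_iff, not_or] at hx hz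
      obtain ⟨hxv, hxu⟩ := hx
      rcases hz with rfl | rfl
      · exact hdeepest x _ hxv rfl
      -- a vertex with `z = u` on its shortest path to `r` would be another deepest neighbour of `u`
      · by_contra! hx
        have := hG.pos_dist_of_ne (Ne.symm hxu)
        have := hv x
        have hzx : G.dist z x = 1 := by omega
        exact hc ⟨x, hxv, dist_eq_one_iff_adj.mp hzx, by omega⟩

theorem Connected.exists_close_pair_induce_compl_connected [Finite V] (hG : G.Connected)
    (hdiam : ¬∀ x y, G.dist x y ≤ 2) :
    ∃ a b, a ≠ b ∧ G.dist a b ≤ 2 ∧ (G.induce ({a, b}ᶜ : Set V)).Connected := by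
  have := hG.nonempty
  obtain ⟨r⟩ := hG.nonempty
  obtain ⟨v, hv⟩ := Finite.exists_max (G.dist r)
  have hD : 2 ≤ G.dist r v := by
    by_contra! hD
    refine hdiam fun x y => ?_
    have := hG.dist_triangle (u := x) (v := r) (w := y)
    have := hv y
    have := dist_comm (G := G) (u := x) (v := r) ▸ hv x
    omega
  have hrv : r ≠ v := by
    rintro rfl
    simp at hD
  obtain ⟨u, hvu, hu⟩ := (hG.preconnected v r).exists_adj_dist_add_one_eq hrv.symm
  rw [dist_comm, dist_comm (u := v)] at hu
  exact hG.exists_close_pair_induce_compl_connected_of_deepest hv hD hvu hu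

variable [DecidableEq V]

theorem exists_finpartition_of_induce_connected {s : Finset V}
    (hs : (G.induce (s : Set V)).Connected) (h2 : 2 ≤ #s) :
    ∃ P : Finpartition s, ∀ t ∈ P.parts, (#t = 2 ∨ #t = 3) ∧
      ∀ x ∈ t, ∀ y ∈ t, G.edist x y ≤ 2 := by
  induction s using Finset.strongInduction with | H s ih
  set Gs := G.induce (s : Set V)
  have hclose : ∀ x y : (s : Set V), Gs.dist x y ≤ 2 → G.edist x y ≤ 2 := fun x y hxy =>
    calc G.edist x y ≤ Gs.edist x y := (Embedding.induce _).toHom.edist_le x y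
      _ = Gs.dist x y := (hs.preconnected x y).coe_dist_eq_edist.symm
      _ ≤ 2 := by exact_mod_cast hxy
  by_cases hdiam : ∀ x y, Gs.dist x y ≤ 2
  · obtain ⟨P, hP⟩ := exists_finpartition_card_two_or_three h2
    exact ⟨P, fun t ht => ⟨hP t ht, fun x hx y hy =>
      hclose ⟨x, P.le ht hx⟩ ⟨y, P.le ht hy⟩ (hdiam _ _)⟩⟩
  have h4 : 4 ≤ #s := by
    by_contra! h3
    refine hdiam fun x y => ?_
    have := hs.dist_lt_card x y
    have hcard : Fintype.card (s : Set V) = #s := by simp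
    omega
  obtain ⟨a, b, hab, hdab, hconn⟩ := hs.exists_close_pair_induce_compl_connected hdiam
  have hab' : a.1 ≠ b.1 := Subtype.coe_ne_coe.mpr hab
  have hpair : {a.1, b.1} ⊆ s := insert_subset_iff.mpr ⟨a.2, singleton_subset_iff.mpr b.2⟩
  refine Finpartition.exists_forall_parts_of_sdiff hpair (insert_nonempty _ _)
    ⟨Or.inl (card_pair hab'), ?_⟩ (ih _ (sdiff_ssubset hpair (insert_nonempty _ _)) ?_ ?_)
  · simp only [mem_insert, mem_singleton]
    rintro x (rfl | rfl) y (rfl | rfl)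
    · simp
    · exact hclose a b hdab
    · exact edist_comm.trans_le (hclose a b hdab)
    · simp
  · have hrest : ((s \ {a.1, b.1} : Finset V) : Set V) = Subtype.val '' ({a, b}ᶜ : Set _) := by
      rw [Set.image_val_compl, Set.image_pair, coe_sdiff, coe_pair]
    rw [hrest]
    exact hconn.induce_image_val
  · rw [card_sdiff_of_subset hpair, card_pair hab']
    omega

end SimpleGraph

/-- **Pairing vertices in a connected graph.**
For every finite connected undirected simple graph `G` with at least two vertices, there
exists a partition of the vertex set into parts of cardinality 2 or 3, each of diameter
at most 2 for the graph distance (any two vertices of a part are at graph distance at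
most 2). -/
theorem partition_pairs_triples_of_connected
    {V : Type*} [Fintype V] [DecidableEq V] (G : SimpleGraph V)
    (hG : G.Connected) (hV : 2 ≤ Fintype.card V) :
    ∃ P : Finpartition (Finset.univ : Finset V),
      ∀ s ∈ P.parts, (s.card = 2 ∨ s.card = 3) ∧
        ∀ x ∈ s, ∀ y ∈ s, G.edist x y ≤ 2 := by
  have hconn : (G.induce ((univ : Finset V) : Set V)).Connected := by
    rw [coe_univ]
    exact (induceUnivIso G).connected_iff.mpr hG
  exact exists_finpartition_of_induce_connected hconn hV
end

section
/- Let d, n, r, v ≥ 1 be integers and β ∈ (0,1). Let C ⊆ Z_n^d be a non-empty, 8r-connected set such that |C ∩ B(x, 4r)| ≥ v for every x ∈ C. Then for every R ⊆ C with 0 < |R| ≤ β|C|, there exists x⋆ ∈ R such that |(C \ R) ∩ B(x⋆, 16r)| ≥ (1 − β)v. -/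
/-- The distance on the torus `(ℤ/nℤ)^d`: the infimum of the sup-norm distances between
integer lifts of the two points. -/
noncomputable def torusDist {d n : ℕ} (x y : Fin d → ZMod n) : ℕ :=
  sInf {k : ℕ | ∃ a b : Fin d → ℤ,
    (∀ i, (a i : ZMod n) = x i) ∧ (∀ i, (b i : ZMod n) = y i) ∧
    (Finset.univ.sup fun i => (a i - b i).natAbs) = k}

/-- The closed ball of radius `r` around `x` in the torus `(ℤ/nℤ)^d`. -/
def torusBall {d n : ℕ} (x : Fin d → ZMod n) (r : ℕ) : Set (Fin d → ZMod n) :=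
  {y | torusDist x y ≤ r}

/-- A set `C ⊆ (ℤ/nℤ)^d` is `r`-connected if any two of its points can be joined by a
finite sequence of points of `C` whose consecutive terms are at distance at most `r`. -/
def torusRConnected {d n : ℕ} (r : ℕ) (C : Set (Fin d → ZMod n)) : Prop :=
  ∀ x ∈ C, ∀ y ∈ C, ∃ (k : ℕ) (f : ℕ → Fin d → ZMod n),
    f 0 = x ∧ f k = y ∧ (∀ j ≤ k, f j ∈ C) ∧ ∀ j < k, torusDist (f j) (f (j + 1)) ≤ r

section torusAux

variable {d n : ℕ}

lemma torusDist_le (x y : Fin d → ZMod n) (a b : Fin d → ℤ)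
    (ha : ∀ i, (a i : ZMod n) = x i) (hb : ∀ i, (b i : ZMod n) = y i) :
    torusDist x y ≤ Finset.univ.sup fun i => (a i - b i).natAbs :=
  Nat.sInf_le ⟨a, b, ha, hb, rfl⟩

lemma torusDist_spec (x y : Fin d → ZMod n) :
    ∃ a b : Fin d → ℤ, (∀ i, (a i : ZMod n) = x i) ∧ (∀ i, (b i : ZMod n) = y i) ∧
      (Finset.univ.sup fun i => (a i - b i).natAbs) = torusDist x y := by
  have h : ∀ z : ZMod n, ∃ a : ℤ, (a : ZMod n) = z := ZMod.intCast_surjective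
  choose A hA using fun i => h (x i)
  choose B hB using fun i => h (y i)
  have hne : {k : ℕ | ∃ a b : Fin d → ℤ,
      (∀ i, (a i : ZMod n) = x i) ∧ (∀ i, (b i : ZMod n) = y i) ∧
      (Finset.univ.sup fun i => (a i - b i).natAbs) = k}.Nonempty :=
    ⟨_, ⟨A, B, hA, hB, rfl⟩⟩
  exact Nat.sInf_mem hne

lemma torusDist_self (x : Fin d → ZMod n) : torusDist x x = 0 := by
  have h : ∀ z : ZMod n, ∃ a : ℤ, (a : ZMod n) = z := ZMod.intCast_surjective
  choose A hA using fun i => h (x i)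
  have h2 := torusDist_le x x A A hA hA
  have h3 : (Finset.univ.sup fun i => (A i - A i).natAbs) ≤ 0 :=
    Finset.sup_le fun i _ => by simp
  omega

lemma torusDist_comm (x y : Fin d → ZMod n) : torusDist x y = torusDist y x := by
  unfold torusDist
  congr 1
  ext k
  constructor
  · rintro ⟨a, b, ha, hb, hk⟩
    exact ⟨b, a, hb, ha, by
      rw [← hk]; exact Finset.sup_congr rfl fun i _ => (by rw [← Int.natAbs_neg, neg_sub] : ((_:ℤ) - _).natAbs = _)⟩
  · rintro ⟨a, b, ha, hb, hk⟩
    exact ⟨b, a, hb, ha, by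
      rw [← hk]; exact Finset.sup_congr rfl fun i _ => (by rw [← Int.natAbs_neg, neg_sub] : ((_:ℤ) - _).natAbs = _)⟩

lemma torusDist_triangle (x y z : Fin d → ZMod n) :
    torusDist x z ≤ torusDist x y + torusDist y z := by
  obtain ⟨a, b, ha, hb, hab⟩ := torusDist_spec x y
  obtain ⟨b', c, hb', hc, hbc⟩ := torusDist_spec y z
  have ha' : ∀ i, (((fun i => a i + (b' i - b i)) i : ℤ) : ZMod n) = x i := by
    intro i
    push_cast
    rw [ha i, hb i, hb' i]
    ring
  have h1 := torusDist_le x z (fun i => a i + (b' i - b i)) c ha' hc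
  refine h1.trans (Finset.sup_le fun i _ => ?_)
  have e : (fun i => a i + (b' i - b i)) i - c i = (a i - b i) + (b' i - c i) := by ring
  calc ((fun i => a i + (b' i - b i)) i - c i).natAbs
      ≤ (a i - b i).natAbs + (b' i - c i).natAbs := by rw [e]; exact Int.natAbs_add_le _ _
    _ ≤ torusDist x y + torusDist y z := by
        have l1 : (a i - b i).natAbs ≤ Finset.univ.sup fun j => (a j - b j).natAbs :=
          Finset.le_sup (f := fun j => (a j - b j).natAbs) (Finset.mem_univ i)
        have l2 : (b' i - c i).natAbs ≤ Finset.univ.sup fun j => (b' j - c j).natAbs :=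
          Finset.le_sup (f := fun j => (b' j - c j).natAbs) (Finset.mem_univ i)
        rw [hab] at l1
        rw [hbc] at l2
        omega

end torusAux

/-- **An active particle surrounded by many sleeping ones.**
Let `d, n, r, v ≥ 1`, `β ∈ (0,1)` and let `C ⊆ (ℤ/nℤ)^d` be a non-empty `8r`-connected
set such that `|C ∩ B(x, 4r)| ≥ v` for every `x ∈ C`.  Then for every `R ⊆ C` with
`0 < |R| ≤ β|C|`, there exists `x⋆ ∈ R` with `|(C \ R) ∩ B(x⋆, 16r)| ≥ (1-β) v`. -/
theorem active_site_with_many_sleeping_nearby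
    (d n r v : ℕ) (hd : 1 ≤ d) (hn : 1 ≤ n) (hr : 1 ≤ r) (hv : 1 ≤ v)
    (β : ℝ) (hβ : β ∈ Set.Ioo (0:ℝ) 1)
    (C : Set (Fin d → ZMod n)) (hCne : C.Nonempty)
    (hCconn : torusRConnected (8 * r) C)
    (hCdense : ∀ x ∈ C, v ≤ (C ∩ torusBall x (4 * r)).ncard) :
    ∀ R ⊆ C, R.Nonempty → (R.ncard : ℝ) ≤ β * (C.ncard : ℝ) →
      ∃ x ∈ R, (1 - β) * (v : ℝ) ≤ (((C \ R) ∩ torusBall x (16 * r)).ncard : ℝ) := by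
  classical
  haveI : NeZero n := ⟨by omega⟩
  intro R hRC hRne hRcard
  have hv0 : (0:ℝ) ≤ (v:ℝ) := by positivity
  by_cases hP : ∀ y ∈ C, ∃ x ∈ R, torusDist y x ≤ 4 * r
  · -- Counting case: every point of C is within 4r of R
    by_contra hgoal
    push_neg at hgoal
    have hCfin : C.Finite := Set.toFinite C
    have hRfin : R.Finite := Set.toFinite R
    have hDfin : (C \ R).Finite := Set.toFinite _
    have hCpos : 0 < C.ncard := (Set.ncard_pos hCfin).mpr hCne
    have hlt : R.ncard < C.ncard := by
      have h1 : (R.ncard : ℝ) < (C.ncard : ℝ) := by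
        have hc0 : (0:ℝ) < (C.ncard:ℝ) := by exact_mod_cast hCpos
        nlinarith [hβ.2]
      exact_mod_cast h1
    have hnotsub : ¬ C ⊆ R := fun hsub =>
      absurd (Set.ncard_le_ncard hsub hRfin) (by omega)
    obtain ⟨z₀, hz₀C, hz₀R⟩ := Set.not_subset.mp hnotsub
    -- per-point lower bound on |R ∩ B(z,4r)| for z ∈ C \ R
    have hzb : ∀ z ∈ C \ R, β * (v:ℝ) < (((R ∩ torusBall z (4*r))).ncard : ℝ) := by
      intro z hzD
      obtain ⟨hzC, _⟩ := hzD
      obtain ⟨xz, hxzR, hxz⟩ := hP z hzC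
      have hsub : (C \ R) ∩ torusBall z (4*r) ⊆ (C \ R) ∩ torusBall xz (16*r) := by
        rintro u ⟨huD, hu⟩
        refine ⟨huD, ?_⟩
        have t1 := torusDist_triangle xz z u
        have t2 : torusDist xz z = torusDist z xz := torusDist_comm _ _
        simp only [torusBall, Set.mem_setOf_eq] at hu ⊢
        omega
      have h1 : (((C \ R) ∩ torusBall z (4*r)).ncard : ℝ) < (1-β) * v :=
        lt_of_le_of_lt
          (by exact_mod_cast Set.ncard_le_ncard hsub (Set.toFinite _))
          (hgoal xz hxzR)
      have h2 : v ≤ (C ∩ torusBall z (4*r)).ncard := hCdense z hzC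
      have hsplit : C ∩ torusBall z (4*r)
          = (R ∩ torusBall z (4*r)) ∪ ((C \ R) ∩ torusBall z (4*r)) := by
        ext u
        have := @hRC u
        simp only [Set.mem_inter_iff, Set.mem_union, Set.mem_diff]
        tauto
      have hdisj : Disjoint (R ∩ torusBall z (4*r)) ((C \ R) ∩ torusBall z (4*r)) := by
        rw [Set.disjoint_left]
        rintro u ⟨h1', _⟩ ⟨⟨_, h2'⟩, _⟩
        exact h2' h1'
      have h3 : (C ∩ torusBall z (4*r)).ncard
          = (R ∩ torusBall z (4*r)).ncard + ((C \ R) ∩ torusBall z (4*r)).ncard := by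
        rw [hsplit, Set.ncard_union_eq hdisj (Set.toFinite _) (Set.toFinite _)]
      have h2' : (v:ℝ) ≤ ((R ∩ torusBall z (4*r)).ncard : ℝ)
          + (((C \ R) ∩ torusBall z (4*r)).ncard : ℝ) := by
        rw [h3] at h2
        exact_mod_cast h2
      linarith
    set Rf := hRfin.toFinset with hRfdef
    set Df := hDfin.toFinset with hDfdef
    have hDfne : Df.Nonempty := ⟨z₀, by rw [hDfdef, Set.Finite.mem_toFinset]; exact ⟨hz₀C, hz₀R⟩⟩
    obtain ⟨x₀, hx₀⟩ := hRne
    have hRfne : Rf.Nonempty := ⟨x₀, by rw [hRfdef, Set.Finite.mem_toFinset]; exact hx₀⟩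
    have hcard : ∀ (S : Set (Fin d → ZMod n)) (hS : S.Finite) (z : Fin d → ZMod n) (ρ : ℕ),
        (S ∩ torusBall z ρ).ncard = (hS.toFinset.filter fun u => torusDist z u ≤ ρ).card := by
      intro S hS z ρ
      have hEq : S ∩ torusBall z ρ = ↑(hS.toFinset.filter fun u => torusDist z u ≤ ρ) := by
        ext u
        simp only [Set.mem_inter_iff, torusBall, Set.mem_setOf_eq, Finset.coe_filter,
          Set.Finite.mem_toFinset]
      rw [hEq, Set.ncard_coe_finset]
    -- double counting
    have hswap : ∑ z ∈ Df, (R ∩ torusBall z (4*r)).ncard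
        = ∑ x ∈ Rf, ((C \ R) ∩ torusBall x (4*r)).ncard := by
      rw [Finset.sum_congr rfl fun z _ => hcard R hRfin z (4*r),
          Finset.sum_congr rfl fun x _ => hcard (C \ R) hDfin x (4*r)]
      simp_rw [Finset.card_filter]
      rw [Finset.sum_comm]
      exact Finset.sum_congr rfl fun x _ => Finset.sum_congr rfl fun z _ => by
        rw [torusDist_comm]
    have hsum1 : (β * (v:ℝ)) * (Df.card : ℝ)
        < ∑ z ∈ Df, (((R ∩ torusBall z (4*r)).ncard : ℝ)) := by
      have h := Finset.sum_lt_sum_of_nonempty hDfne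
        (f := fun _ => β * (v:ℝ))
        (g := fun z => (((R ∩ torusBall z (4*r)).ncard : ℝ)))
        (fun z hz => hzb z (by rwa [hDfdef, Set.Finite.mem_toFinset] at hz))
      rw [Finset.sum_const, nsmul_eq_mul] at h
      linarith
    have hsum2 : ∑ z ∈ Df, (((R ∩ torusBall z (4*r)).ncard : ℝ))
        = ∑ x ∈ Rf, ((((C \ R) ∩ torusBall x (4*r)).ncard : ℝ)) := by
      exact_mod_cast hswap
    have hsum3 : ∑ x ∈ Rf, ((((C \ R) ∩ torusBall x (4*r)).ncard : ℝ))
        ≤ ∑ x ∈ Rf, ((((C \ R) ∩ torusBall x (16*r)).ncard : ℝ)) := by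
      apply Finset.sum_le_sum
      intro x _
      have hsub : (C \ R) ∩ torusBall x (4*r) ⊆ (C \ R) ∩ torusBall x (16*r) := by
        rintro u ⟨h1', h2'⟩
        refine ⟨h1', ?_⟩
        simp only [torusBall, Set.mem_setOf_eq] at h2' ⊢
        omega
      exact_mod_cast Set.ncard_le_ncard hsub (Set.toFinite _)
    have hsum4 : ∑ x ∈ Rf, ((((C \ R) ∩ torusBall x (16*r)).ncard : ℝ))
        < ((1-β) * (v:ℝ)) * (Rf.card : ℝ) := by
      have h := Finset.sum_lt_sum_of_nonempty hRfne
        (f := fun x => ((((C \ R) ∩ torusBall x (16*r)).ncard : ℝ)))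
        (g := fun _ => (1-β) * (v:ℝ))
        (fun x hx => hgoal x (by rwa [hRfdef, Set.Finite.mem_toFinset] at hx))
      rw [Finset.sum_const, nsmul_eq_mul] at h
      linarith
    have hDcard : Df.card = C.ncard - R.ncard := by
      have h1 : (C \ R).ncard = Df.card := by
        rw [hDfdef, ← Set.ncard_coe_finset, Set.Finite.coe_toFinset]
      rw [← h1, Set.ncard_diff hRC hRfin]
    have hRcardF : Rf.card = R.ncard := by
      rw [hRfdef, ← Set.ncard_coe_finset, Set.Finite.coe_toFinset]
    have hDc : (Df.card : ℝ) = (C.ncard : ℝ) - (R.ncard : ℝ) := by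
      rw [hDcard, Nat.cast_sub hlt.le]
    have hfin : (β * (v:ℝ)) * ((C.ncard : ℝ) - (R.ncard : ℝ))
        < ((1-β) * (v:ℝ)) * (R.ncard : ℝ) := by
      rw [← hDc, ← hRcardF]
      push_cast
      linarith
    have hkey : β * (v:ℝ) * (C.ncard:ℝ) < (v:ℝ) * (R.ncard:ℝ) := by nlinarith [hfin]
    have hkey2 : (v:ℝ) * (R.ncard:ℝ) ≤ (v:ℝ) * (β * (C.ncard:ℝ)) :=
      mul_le_mul_of_nonneg_left hRcard hv0
    nlinarith [hkey, hkey2]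
  · -- Path case: find y' ∈ C with 4r < dist(y', R) ≤ 12r
    push_neg at hP
    obtain ⟨y, hyC, hy4⟩ := hP
    obtain ⟨x₀, hx₀R⟩ := hRne
    obtain ⟨k, f, hf0, hfk, hfmem, hfstep⟩ := hCconn x₀ (hRC hx₀R) y hyC
    have key : ∀ j, j ≤ k → (∃ x ∈ R, torusDist (f j) x ≤ 4*r) ∨
        (∃ y' ∈ C, (∀ x ∈ R, 4*r < torusDist y' x) ∧ ∃ x ∈ R, torusDist y' x ≤ 12*r) := by
      intro j
      induction j with
      | zero =>
        intro _
        left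
        exact ⟨x₀, hx₀R, by rw [hf0, torusDist_self]; omega⟩
      | succ j ih =>
        intro hj
        rcases ih (by omega) with hPj | hgood
        · by_cases hP1 : ∃ x ∈ R, torusDist (f (j+1)) x ≤ 4*r
          · left; exact hP1
          · right
            push_neg at hP1
            obtain ⟨x, hxR, hdx⟩ := hPj
            refine ⟨f (j+1), hfmem _ hj, hP1, x, hxR, ?_⟩
            have t1 := torusDist_triangle (f (j+1)) (f j) x
            have t2 : torusDist (f (j+1)) (f j) = torusDist (f j) (f (j+1)) :=
              torusDist_comm _ _
            have t3 := hfstep j (by omega)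
            omega
        · right; exact hgood
    rcases key k le_rfl with hPk | ⟨y', hy'C, hy'far, xs, hxsR, hy'near⟩
    · obtain ⟨x, hxR, hle⟩ := hPk
      rw [hfk] at hle
      exact absurd hle (not_le.mpr (hy4 x hxR))
    · refine ⟨xs, hxsR, ?_⟩
      have hsub : C ∩ torusBall y' (4*r) ⊆ (C \ R) ∩ torusBall xs (16*r) := by
        rintro u ⟨huC, hu⟩
        simp only [torusBall, Set.mem_setOf_eq] at hu
        refine ⟨⟨huC, fun huR => absurd hu (not_le.mpr (hy'far u huR))⟩, ?_⟩
        simp only [torusBall, Set.mem_setOf_eq]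
        have t1 := torusDist_triangle xs y' u
        have t2 : torusDist xs y' = torusDist y' xs := torusDist_comm _ _
        omega
      have h1 : v ≤ (C ∩ torusBall y' (4*r)).ncard := hCdense y' hy'C
      have h2 : (C ∩ torusBall y' (4*r)).ncard ≤ ((C \ R) ∩ torusBall xs (16*r)).ncard :=
        Set.ncard_le_ncard hsub (Set.toFinite _)
      have h3 : (v:ℝ) ≤ (((C \ R) ∩ torusBall xs (16*r)).ncard : ℝ) := by
        exact_mod_cast le_trans h1 h2
      nlinarith [hβ.1]
end

section
/- Let d = 2, let r ≥ 1 and let D_j = 6^j·96·r³ for every j ∈ ℕ. Then for all sufficiently large n, for every A ⊆ Z_n^2 with |A| ≥ n²/2, there exists J ∈ ℕ and an (r², D)-dormitory hierarchy (A_j, C_j)_{j ≤ J} on A such that |A_J| ≥ |A| − n²/2 and every set C ∈ C_0 is 8r-connected and satisfies |C ∩ B(x, 4r)| ≥ r² for every x ∈ C. -/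
/-- The diameter of a subset of the torus `(ℤ/nℤ)^d`. -/
noncomputable def torusDiam {d n : ℕ} (C : Set (Fin d → ZMod n)) : ℕ :=
  sSup {k : ℕ | ∃ x ∈ C, ∃ y ∈ C, torusDist x y = k}

/-- `𝒞` is a partition of the set `A`: its members are non-empty, pairwise disjoint,
and their union is `A`. -/
def IsPartitionOf {α : Type*} (𝒞 : Set (Set α)) (A : Set α) : Prop :=
  (∀ C ∈ 𝒞, C.Nonempty) ∧ ⋃₀ 𝒞 = A ∧
    ∀ C ∈ 𝒞, ∀ C' ∈ 𝒞, C ≠ C' → Disjoint C C'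

/-- A `(v, D)`-dormitory hierarchy on a set `A ⊆ (ℤ/nℤ)^d`: a decreasing sequence of
subsets `A ⊇ A_0 ⊇ ⋯ ⊇ A_J` together with partitions `𝒞_j` of `A_j` such that:
(i) every cluster `C ∈ 𝒞_j` satisfies `|C| ≥ 2^⌊j/2⌋ v`;
(ii) every cluster `C ∈ 𝒞_{j+1} \ 𝒞_j` has diameter at most `D j` and is the union of
two clusters of `𝒞_j`;
(iii) the last partition `𝒞_J` consists of a single set. -/
structure DormitoryHierarchy (d n v : ℕ) (D : ℕ → ℕ) (A : Set (Fin d → ZMod n)) where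
  J : ℕ
  level : ℕ → Set (Fin d → ZMod n)
  part : ℕ → Set (Set (Fin d → ZMod n))
  level_zero_subset : level 0 ⊆ A
  level_antitone : ∀ j, j + 1 ≤ J → level (j + 1) ⊆ level j
  part_isPartition : ∀ j ≤ J, IsPartitionOf (part j) (level j)
  card_ge : ∀ j ≤ J, ∀ C ∈ part j, 2 ^ (j / 2) * v ≤ C.ncard
  merge : ∀ j, j + 1 ≤ J → ∀ C ∈ part (j + 1), C ∉ part j →
    torusDiam C ≤ D j ∧ ∃ C₀ ∈ part j, ∃ C₁ ∈ part j, C = C₀ ∪ C₁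
  final : ∃ C, part J = {C}

/-! Fix `m` with `2r·2^m ≤ n < 4r·2^m` and cut the torus into dyadic boxes, level `j + 1`
halving the boxes of level `j` alternately in each coordinate; a box of level `j` has diameter
at most `4r·2^⌈j/2⌉`, and level `2m` is the whole torus. At level `j`, remove the points whose
box holds fewer than `2^⌊j/2⌋ r²` of the remaining points; the clusters are the boxes. At odd
levels the threshold does not grow while the boxes do, so nothing is removed; at level `2k`
each of the `4^(m-k)` boxes loses fewer than `2^k r²` points. Altogether fewer than
`2·4^m r² ≤ n²/2` points are removed. -/

open Finset

section DenseCore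

variable {α β γ : Type*} [DecidableEq β] [DecidableEq γ] {g : α → β} {g' : α → γ} {θ : ℕ}
    {T : Finset α}

def fiberCells (g : α → β) (T : Finset α) : Set (Set α) :=
  {C | ∃ z ∈ T, C = ↑{w ∈ T | g w = g z}}

theorem isPartitionOf_fiberCells (g : α → β) (T : Finset α) :
    IsPartitionOf (fiberCells g T) ↑T := by
  refine ⟨?_, ?_, ?_⟩
  · rintro C ⟨z, hz, rfl⟩
    exact ⟨z, by simp [hz]⟩
  · ext w
    simp only [Set.mem_sUnion, fiberCells, Set.mem_ofPred_eq, mem_coe]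
    constructor
    · rintro ⟨C, ⟨z, -, rfl⟩, hw⟩
      exact (mem_filter.mp hw).1
    · intro hw
      exact ⟨_, ⟨w, hw, rfl⟩, mem_filter.mpr ⟨hw, rfl⟩⟩
  · rintro C ⟨z, -, rfl⟩ C' ⟨z', -, rfl⟩ hne
    refine Set.disjoint_left.mpr fun w hw hw' => hne ?_
    rw [← (mem_filter.mp hw).2, (mem_filter.mp hw').2]

theorem apply_eq_of_mem_fiberCells {C : Set α} (hC : C ∈ fiberCells g T) {x y : α}
    (hx : x ∈ C) (hy : y ∈ C) : g x = g y := by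
  obtain ⟨z, -, rfl⟩ := hC
  exact (mem_filter.mp hx).2.trans (mem_filter.mp hy).2.symm

theorem fiberCells_of_forall_apply_eq (hg : ∀ x y, g x = g y) (hT : T.Nonempty) :
    fiberCells g T = {↑T} := by
  have hcell : ∀ z, {w ∈ T | g w = g z} = T := fun z => filter_true_of_mem fun w _ => hg w z
  ext C
  constructor
  · rintro ⟨z, -, rfl⟩
    rw [hcell, Set.mem_singleton_iff]
  · rintro rfl
    obtain ⟨z, hz⟩ := hT
    exact ⟨z, hz, by rw [hcell]⟩

/-- `hsplit` says that a fibre of `g'` meets at most two fibres of `g`; the two cells found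
coincide when it meets only one. -/
theorem exists_union_of_mem_fiberCells (hrefine : ∀ x y, g x = g y → g' x = g' y)
    (hsplit : ∀ x y z, g' x = g' y → g' x = g' z → g x = g y ∨ g x = g z ∨ g y = g z)
    {C : Set α} (hC : C ∈ fiberCells g' T) :
    ∃ C₀ ∈ fiberCells g T, ∃ C₁ ∈ fiberCells g T, C = C₀ ∪ C₁ := by
  obtain ⟨z, hz, rfl⟩ := hC
  by_cases hother : ∃ z' ∈ T, g' z' = g' z ∧ g z' ≠ g z
  · obtain ⟨z', hz', hg'z', hgz'⟩ := hother
    refine ⟨_, ⟨z, hz, rfl⟩, _, ⟨z', hz', rfl⟩, ?_⟩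
    ext w
    simp only [Set.mem_union, mem_coe, mem_filter]
    constructor
    · rintro ⟨hw, hgw⟩
      rcases hsplit z z' w hg'z'.symm hgw.symm with h | h | h
      · exact absurd h.symm hgz'
      · exact Or.inl ⟨hw, h.symm⟩
      · exact Or.inr ⟨hw, h.symm⟩
    · rintro (⟨hw, hgw⟩ | ⟨hw, hgw⟩)
      · exact ⟨hw, hrefine w z hgw⟩
      · exact ⟨hw, (hrefine w z' hgw).trans hg'z'⟩
  · push Not at hother
    refine ⟨_, ⟨z, hz, rfl⟩, _, ⟨z, hz, rfl⟩, ?_⟩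
    rw [Set.union_self]
    congr 1
    exact filter_congr fun w hw => ⟨hother w hw, hrefine w z⟩

def denseCore (g : α → β) (θ : ℕ) (T : Finset α) : Finset α :=
  {z ∈ T | θ ≤ #{w ∈ T | g w = g z}}

theorem denseCore_subset : denseCore g θ T ⊆ T := filter_subset _ _

theorem filter_denseCore_eq {z : α} (hz : z ∈ denseCore g θ T) :
    {w ∈ denseCore g θ T | g w = g z} = {w ∈ T | g w = g z} := by
  rw [denseCore, filter_filter]
  refine filter_congr fun w _ => and_iff_right_of_imp fun hw => ?_
  rw [hw]
  exact (mem_filter.mp hz).2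

theorem fiberCells_denseCore_subset : fiberCells g (denseCore g θ T) ⊆ fiberCells g T := by
  rintro C ⟨z, hz, rfl⟩
  exact ⟨z, denseCore_subset hz, by rw [filter_denseCore_eq hz]⟩

theorem le_ncard_of_mem_fiberCells_denseCore {C : Set α}
    (hC : C ∈ fiberCells g (denseCore g θ T)) : θ ≤ C.ncard := by
  obtain ⟨z, hz, rfl⟩ := hC
  rw [Set.ncard_coe_finset, filter_denseCore_eq hz]
  exact (mem_filter.mp hz).2

theorem denseCore_denseCore_of_refines (hrefine : ∀ x y, g x = g y → g' x = g' y) :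
    denseCore g' θ (denseCore g θ T) = denseCore g θ T := by
  refine filter_true_of_mem fun z hz => ?_
  calc θ ≤ #{w ∈ T | g w = g z} := (mem_filter.mp hz).2
    _ = #{w ∈ denseCore g θ T | g w = g z} := by rw [filter_denseCore_eq hz]
    _ ≤ #{w ∈ denseCore g θ T | g' w = g' z} :=
      card_le_card (monotone_filter_right _ fun w _ => hrefine w z)

/-- Each fibre loses fewer than `θ` points, so at most `θ` per value of `g`. -/
theorem card_sdiff_denseCore_le [DecidableEq α] (I : Finset β) (hI : ∀ z ∈ T, g z ∈ I) :
    #(T \ denseCore g θ T) ≤ #I * θ := by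
  rw [denseCore, ← filter_not]
  set R := {z ∈ T | ¬θ ≤ #{w ∈ T | g w = g z}}
  have hfiber : ∀ b ∈ I, #{z ∈ R | g z = b} ≤ θ := by
    intro b _
    obtain h | ⟨z, hz⟩ := eq_empty_or_nonempty {z ∈ R | g z = b}
    · simp [h]
    obtain ⟨⟨hzT, hsmall⟩, rfl⟩ := mem_filter.mp hz |>.imp_left mem_filter.mp
    refine (card_le_card fun w hw => ?_).trans (not_le.mp hsmall).le
    obtain ⟨hwR, hgw⟩ := mem_filter.mp hw
    exact mem_filter.mpr ⟨(mem_filter.mp hwR).1, hgw⟩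
  rw [card_eq_sum_card_fiberwise fun z hz => hI z (mem_filter.mp hz).1, ← smul_eq_mul]
  exact sum_le_card_nsmul _ _ _ hfiber

def denseCoreSeq (g : ℕ → α → β) (θ : ℕ → ℕ) (A : Finset α) : ℕ → Finset α
  | 0 => A
  | j + 1 => denseCore (g j) (θ j) (denseCoreSeq g θ A j)

theorem denseCoreSeq_subset (g : ℕ → α → β) (θ : ℕ → ℕ) (A : Finset α) :
    ∀ j, denseCoreSeq g θ A j ⊆ A
  | 0 => subset_rfl
  | j + 1 => denseCore_subset.trans (denseCoreSeq_subset g θ A j)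

theorem denseCoreSeq_add_two_eq {g : ℕ → α → β} {θ : ℕ → ℕ} (A : Finset α) {j : ℕ}
    (hθ : θ (j + 1) = θ j) (hrefine : ∀ x y, g j x = g j y → g (j + 1) x = g (j + 1) y) :
    denseCoreSeq g θ A (j + 2) = denseCoreSeq g θ A (j + 1) := by
  simp only [denseCoreSeq, hθ]
  exact denseCore_denseCore_of_refines hrefine

end DenseCore

section Torus

variable {d n : ℕ}

theorem torusDist_le_of_forall_natAbs_le [NeZero n] {x y : Fin d → ZMod n} {s : ℕ}
    (h : ∀ i, (((x i).val : ℤ) - (y i).val).natAbs ≤ s) : torusDist x y ≤ s := by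
  refine le_trans (Nat.sInf_le ?_) (Finset.sup_le (s := univ) fun i _ => h i)
  exact ⟨fun i => (x i).val, fun i => (y i).val, by simp, by simp, rfl⟩

theorem torusDiam_le {C : Set (Fin d → ZMod n)} {s : ℕ}
    (h : ∀ x ∈ C, ∀ y ∈ C, torusDist x y ≤ s) : torusDiam C ≤ s :=
  csSup_le' <| by
    rintro k ⟨x, hx, y, hy, rfl⟩
    exact h x hx y hy

theorem torusRConnected_of_forall_torusDist_le {C : Set (Fin d → ZMod n)} {s : ℕ}
    (h : ∀ x ∈ C, ∀ y ∈ C, torusDist x y ≤ s) : torusRConnected s C := by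
  intro x hx y hy
  refine ⟨1, fun t => if t = 0 then x else y, rfl, rfl, fun j hj => ?_, fun j hj => ?_⟩
  · interval_cases j <;> simpa
  · interval_cases j
    simpa using h x hx y hy

def DormitoryHierarchy.ofDenseCoreSeq {v : ℕ} {D : ℕ → ℕ} {β : Type*} [DecidableEq β]
    {A : Set (Fin d → ZMod n)} (T : Finset (Fin d → ZMod n)) (hTA : ↑T ⊆ A)
    (g : ℕ → (Fin d → ZMod n) → β) (J : ℕ)
    (hrefine : ∀ j x y, g j x = g j y → g (j + 1) x = g (j + 1) y)
    (hsplit : ∀ j x y z, g (j + 1) x = g (j + 1) y → g (j + 1) x = g (j + 1) z →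
      g j x = g j y ∨ g j x = g j z ∨ g j y = g j z)
    (hdiam : ∀ j x y, g (j + 1) x = g (j + 1) y → torusDist x y ≤ D j)
    (htop : ∀ x y, g J x = g J y)
    (hne : (denseCoreSeq g (fun j => 2 ^ (j / 2) * v) T (J + 1)).Nonempty) :
    DormitoryHierarchy d n v D A where
  J := J
  level j := ↑(denseCoreSeq g (fun j => 2 ^ (j / 2) * v) T (j + 1))
  part j := fiberCells (g j) (denseCoreSeq g (fun j => 2 ^ (j / 2) * v) T (j + 1))
  level_zero_subset := (coe_subset.mpr (denseCoreSeq_subset _ _ T 1)).trans hTA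
  level_antitone _ _ := coe_subset.mpr denseCore_subset
  part_isPartition _ _ := isPartitionOf_fiberCells _ _
  card_ge _ _ _ hC := le_ncard_of_mem_fiberCells_denseCore hC
  merge j _ _ hC _ :=
    ⟨torusDiam_le fun x hx y hy => hdiam j x y (apply_eq_of_mem_fiberCells hC hx hy),
      exists_union_of_mem_fiberCells (hrefine j) (hsplit j) (fiberCells_denseCore_subset hC)⟩
  final := ⟨_, fiberCells_of_forall_apply_eq htop hne⟩

end Torus

section Grid

/-- The index of the interval `[⌈t n / 2^i⌉, ⌈(t + 1) n / 2^i⌉)` containing `v`, in the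
splitting of `[0, n)` into `2^i` intervals of almost equal length. -/
def dyadicIdx (n i v : ℕ) : ℕ := v * 2 ^ i / n

variable {n : ℕ}

theorem dyadicIdx_lt {v : ℕ} (hv : v < n) (i : ℕ) : dyadicIdx n i v < 2 ^ i :=
  Nat.div_lt_of_lt_mul (Nat.mul_lt_mul_of_pos_right hv (by positivity))

theorem dyadicIdx_zero {v : ℕ} (hv : v < n) : dyadicIdx n 0 v = 0 := by
  simp [dyadicIdx, Nat.div_eq_of_lt hv]

theorem dyadicIdx_div_two {v : ℕ} (hv : v < n) (i : ℕ) :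
    dyadicIdx n i v / 2 = dyadicIdx n (i - 1) v := by
  cases i with
  | zero => simp [dyadicIdx_zero hv]
  | succ i =>
    rw [dyadicIdx, dyadicIdx, Nat.div_div_eq_div_mul, pow_succ, ← mul_assoc,
      Nat.mul_div_mul_right _ _ two_pos, Nat.add_sub_cancel]

theorem lt_add_of_dyadicIdx_eq (hn : 0 < n) {i v w c : ℕ}
    (h : dyadicIdx n i v = dyadicIdx n i w) (hc : n ≤ c * 2 ^ i) : v < w + c := by
  have hv := Nat.lt_div_mul_add (a := v * 2 ^ i) hn
  have hw := Nat.div_mul_le_self (w * 2 ^ i) n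
  rw [← dyadicIdx, h, dyadicIdx] at hv
  exact Nat.lt_of_mul_lt_mul_right (a := 2 ^ i) (by rw [add_mul]; omega)

/-- The box of level `j` containing `z`: a product of dyadic intervals of depths
`m - ⌈j/2⌉` and `m - ⌊j/2⌋`, so that passing to level `j + 1` halves the boxes alternately
in the first and in the second coordinate. -/
def boxIdx (n m j : ℕ) (z : Fin 2 → ZMod n) : ℕ × ℕ :=
  (dyadicIdx n (m - (j + 1) / 2) (z 0).val, dyadicIdx n (m - j / 2) (z 1).val)

variable [NeZero n] {m j : ℕ}

theorem boxIdx_mem (z : Fin 2 → ZMod n) :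
    boxIdx n m j z ∈ range (2 ^ (m - (j + 1) / 2)) ×ˢ range (2 ^ (m - j / 2)) :=
  mem_product.mpr ⟨mem_range.mpr (dyadicIdx_lt (ZMod.val_lt _) _),
    mem_range.mpr (dyadicIdx_lt (ZMod.val_lt _) _)⟩

theorem boxIdx_of_two_mul_le (hj : 2 * m ≤ j) (z : Fin 2 → ZMod n) :
    boxIdx n m j z = (0, 0) := by
  rw [boxIdx, show m - (j + 1) / 2 = 0 by omega, show m - j / 2 = 0 by omega,
    dyadicIdx_zero (ZMod.val_lt _), dyadicIdx_zero (ZMod.val_lt _)]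

theorem boxIdx_succ_of_even (hj : Even j) (z : Fin 2 → ZMod n) :
    boxIdx n m (j + 1) z = ((boxIdx n m j z).1 / 2, (boxIdx n m j z).2) := by
  obtain ⟨k, rfl⟩ := hj
  simp only [boxIdx, dyadicIdx_div_two (ZMod.val_lt _)]
  congr 2 <;> omega

theorem boxIdx_succ_of_odd (hj : Odd j) (z : Fin 2 → ZMod n) :
    boxIdx n m (j + 1) z = ((boxIdx n m j z).1, (boxIdx n m j z).2 / 2) := by
  obtain ⟨k, rfl⟩ := hj
  simp only [boxIdx, dyadicIdx_div_two (ZMod.val_lt _)]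
  congr 2 <;> omega

theorem boxIdx_succ_eq_of_eq {x y : Fin 2 → ZMod n} (h : boxIdx n m j x = boxIdx n m j y) :
    boxIdx n m (j + 1) x = boxIdx n m (j + 1) y := by
  rcases j.even_or_odd with hj | hj
  · rw [boxIdx_succ_of_even hj, boxIdx_succ_of_even hj, h]
  · rw [boxIdx_succ_of_odd hj, boxIdx_succ_of_odd hj, h]

theorem boxIdx_eq_or_eq_or_eq_of_succ_eq {x y z : Fin 2 → ZMod n}
    (hxy : boxIdx n m (j + 1) x = boxIdx n m (j + 1) y)
    (hxz : boxIdx n m (j + 1) x = boxIdx n m (j + 1) z) :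
    boxIdx n m j x = boxIdx n m j y ∨ boxIdx n m j x = boxIdx n m j z ∨
      boxIdx n m j y = boxIdx n m j z := by
  rcases j.even_or_odd with hj | hj
  · simp only [boxIdx_succ_of_even hj, Prod.ext_iff] at hxy hxz ⊢
    omega
  · simp only [boxIdx_succ_of_odd hj, Prod.ext_iff] at hxy hxz ⊢
    omega

theorem torusDist_le_of_boxIdx_eq {r : ℕ} (hn : n ≤ 4 * r * 2 ^ m) {x y : Fin 2 → ZMod n}
    (h : boxIdx n m j x = boxIdx n m j y) : torusDist x y ≤ 4 * r * 2 ^ ((j + 1) / 2) := by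
  have hcover : ∀ t ≤ (j + 1) / 2, n ≤ 4 * r * 2 ^ ((j + 1) / 2) * 2 ^ (m - t) := by
    intro t ht
    refine hn.trans ?_
    rw [mul_assoc (4 * r) (2 ^ _), ← pow_add]
    gcongr
    · norm_num
    · omega
  have hn0 : 0 < n := Nat.pos_of_neZero n
  obtain ⟨h0, h1⟩ := Prod.ext_iff.mp h
  have a0 := lt_add_of_dyadicIdx_eq hn0 h0 (hcover _ le_rfl)
  have b0 := lt_add_of_dyadicIdx_eq hn0 h0.symm (hcover _ le_rfl)
  have a1 := lt_add_of_dyadicIdx_eq hn0 h1 (hcover (j / 2) (by omega))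
  have b1 := lt_add_of_dyadicIdx_eq hn0 h1.symm (hcover (j / 2) (by omega))
  refine torusDist_le_of_forall_natAbs_le (Fin.forall_fin_two.mpr ⟨?_, ?_⟩) <;> omega

/-- Level `2k + 1` has the same threshold as level `2k` and coarser boxes. -/
theorem denseCoreSeq_boxIdx_two_mul_add_two (r : ℕ) (A : Finset (Fin 2 → ZMod n)) (k : ℕ) :
    denseCoreSeq (boxIdx n m) (fun j => 2 ^ (j / 2) * r ^ 2) A (2 * k + 2) =
      denseCoreSeq (boxIdx n m) (fun j => 2 ^ (j / 2) * r ^ 2) A (2 * k + 1) :=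
  denseCoreSeq_add_two_eq A (by simp only [show (2 * k + 1) / 2 = 2 * k / 2 by omega])
    fun _ _ => boxIdx_succ_eq_of_eq

/-- The removal at level `2k` is at most (number of boxes) × (threshold) `= 2^(2m-k) r²`, and
level `2k + 1` removes nothing; the invariant encodes the resulting geometric series. -/
theorem card_sdiff_denseCoreSeq_boxIdx_add_le (r : ℕ) (A : Finset (Fin 2 → ZMod n)) {k : ℕ}
    (hk : k ≤ m + 1) :
    #(A \ denseCoreSeq (boxIdx n m) (fun j => 2 ^ (j / 2) * r ^ 2) A (2 * k)) +
      2 ^ (2 * m + 1 - k) * r ^ 2 ≤ 2 ^ (2 * m + 1) * r ^ 2 := by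
  induction k with
  | zero => simp [denseCoreSeq]
  | succ k ih =>
    set S := denseCoreSeq (boxIdx n m) (fun j => 2 ^ (j / 2) * r ^ 2) A
    have hodd : S (2 * (k + 1)) = S (2 * k + 1) := denseCoreSeq_boxIdx_two_mul_add_two r A k
    have hremoved : #(S (2 * k) \ S (2 * k + 1)) ≤ 2 ^ (2 * m - k) * r ^ 2 := by
      refine (card_sdiff_denseCore_le _ fun z _ => boxIdx_mem z).trans_eq ?_
      rw [card_product, card_range, card_range, show (2 * k + 1) / 2 = k by omega,
        show 2 * k / 2 = k by omega, ← mul_assoc, ← pow_add, ← pow_add]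
      congr 2
      omega
    have htriangle : #(A \ S (2 * k + 1)) ≤ #(A \ S (2 * k)) + #(S (2 * k) \ S (2 * k + 1)) :=
      (card_le_card (sdiff_triangle _ _ _)).trans (card_union_le _ _)
    have hpow : 2 ^ (2 * m + 1 - k) = 2 ^ (2 * m + 1 - (k + 1)) + 2 ^ (2 * m - k) := by
      rw [show 2 * m + 1 - k = 2 * m - k + 1 by omega,
        show 2 * m + 1 - (k + 1) = 2 * m - k by omega, pow_succ]
      ring
    have := ih (by omega)
    rw [hpow, add_mul] at this
    rw [hodd]
    omega

theorem card_sub_lt_card_denseCoreSeq_boxIdx {r : ℕ} (hr : 0 < r) (hn : 2 * r * 2 ^ m ≤ n)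
    (A : Finset (Fin 2 → ZMod n)) :
    (#A : ℝ) - n ^ 2 / 2 <
      #(denseCoreSeq (boxIdx n m) (fun j => 2 ^ (j / 2) * r ^ 2) A (2 * m + 1)) := by
  have hinv := card_sdiff_denseCoreSeq_boxIdx_add_le r A (le_refl (m + 1))
  rw [show 2 * (m + 1) = 2 * m + 2 by ring, show 2 * m + 1 - (m + 1) = m by omega,
    denseCoreSeq_boxIdx_two_mul_add_two r A m] at hinv
  set S := denseCoreSeq (boxIdx n m) (fun j => 2 ^ (j / 2) * r ^ 2) A (2 * m + 1)
  have hpos : 0 < 2 ^ m * r ^ 2 := by positivity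
  have hsq : 2 * (2 ^ (2 * m + 1) * r ^ 2) ≤ n ^ 2 :=
    calc 2 * (2 ^ (2 * m + 1) * r ^ 2) = (2 * r * 2 ^ m) ^ 2 := by ring
      _ ≤ n ^ 2 := Nat.pow_le_pow_left hn 2
  have hremoved : (2 * #(A \ S) : ℝ) < n ^ 2 := by exact_mod_cast (by omega)
  rw [← card_sdiff_add_card_eq_card (denseCoreSeq_subset _ _ A _ : S ⊆ A)]
  push_cast
  linarith

end Grid

theorem exists_mul_two_pow_le_lt {c n : ℕ} (hc : 0 < c) (hcn : c ≤ n) :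
    ∃ m, c * 2 ^ m ≤ n ∧ n < 2 * c * 2 ^ m := by
  have hq : n / c ≠ 0 := (Nat.div_pos hcn hc).ne'
  refine ⟨Nat.log 2 (n / c), ?_, ?_⟩
  · exact (Nat.mul_le_mul_left c (Nat.pow_log_le_self 2 hq)).trans (Nat.mul_div_le n c)
  · have := (Nat.div_lt_iff_lt_mul hc).mp (Nat.lt_pow_succ_log_self one_lt_two (n / c))
    rw [pow_succ] at this
    linarith

theorem four_mul_two_pow_le (r j : ℕ) :
    4 * r * 2 ^ ((j + 2) / 2) ≤ 6 ^ j * 96 * r ^ 3 :=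
  calc 4 * r * 2 ^ ((j + 2) / 2) ≤ 4 * r * 2 ^ (j + 1) := by gcongr <;> omega
    _ ≤ 4 * r ^ 3 * (2 * 6 ^ j) := by
      rw [pow_succ']
      gcongr
      · exact Nat.le_self_pow (by norm_num) r
      · norm_num
    _ ≤ 6 ^ j * 96 * r ^ 3 := by linarith [Nat.zero_le (6 ^ j * r ^ 3)]

/-- **Dormitory hierarchy with dense clusters at level 0 (high sleep rate, `d = 2`).**
Let `r ≥ 1` and `D j = 6^j · 96 r³`.  For all sufficiently large `n`, for every
`A ⊆ (ℤ/nℤ)²` with `|A| ≥ n²/2`, there exists an `(r², D)`-dormitory hierarchy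
`(A_j, 𝒞_j)_{j ≤ J}` on `A` with `|A_J| ≥ |A| − n²/2`, in which every cluster
`C ∈ 𝒞₀` is `8r`-connected and satisfies `|C ∩ B(x, 4r)| ≥ r²` for every `x ∈ C`. -/
theorem dormitory_hierarchy_dense_clusters
    (r : ℕ) (hr : 1 ≤ r) (D : ℕ → ℕ) (hD : ∀ j, D j = 6 ^ j * 96 * r ^ 3) :
    ∃ n₀ : ℕ, ∀ n, n₀ ≤ n → ∀ A : Set (Fin 2 → ZMod n),
      (n : ℝ) ^ 2 / 2 ≤ (A.ncard : ℝ) →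
      ∃ H : DormitoryHierarchy 2 n (r ^ 2) D A,
        (A.ncard : ℝ) - (n : ℝ) ^ 2 / 2 ≤ ((H.level H.J).ncard : ℝ) ∧
        ∀ C ∈ H.part 0, torusRConnected (8 * r) C ∧
          ∀ x ∈ C, r ^ 2 ≤ (C ∩ torusBall x (4 * r)).ncard := by
  classical
  refine ⟨2 * r, fun n hn A hA => ?_⟩
  have : NeZero n := ⟨by omega⟩
  obtain ⟨m, hlow, hup⟩ := exists_mul_two_pow_le_lt (by omega : 0 < 2 * r) hn
  have hbox : ∀ j x y, boxIdx n m j x = boxIdx n m j y →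
      torusDist x y ≤ 4 * r * 2 ^ ((j + 1) / 2) := fun j x y =>
    torusDist_le_of_boxIdx_eq (by linarith)
  set S := denseCoreSeq (boxIdx n m) (fun j => 2 ^ (j / 2) * r ^ 2) A.toFinset (2 * m + 1)
  have hS : (A.ncard : ℝ) - n ^ 2 / 2 < #S := by
    simpa [Set.ncard_eq_toFinset_card'] using
      card_sub_lt_card_denseCoreSeq_boxIdx (by omega) hlow A.toFinset
  refine ⟨.ofDenseCoreSeq A.toFinset (by simp) (boxIdx n m) (2 * m)
      (fun _ _ _ => boxIdx_succ_eq_of_eq) (fun _ _ _ _ => boxIdx_eq_or_eq_or_eq_of_succ_eq)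
      (fun j x y h => (hbox _ x y h).trans (hD j ▸ four_mul_two_pow_le r j))
      (fun x y => by rw [boxIdx_of_two_mul_le le_rfl, boxIdx_of_two_mul_le le_rfl])
      (card_pos.mp (by exact_mod_cast (by linarith : (0 : ℝ) < #S))), ?_, fun C hC => ?_⟩
  · change _ ≤ ((S : Set (Fin 2 → ZMod n)).ncard : ℝ)
    rw [Set.ncard_coe_finset]
    exact hS.le
  · have h4r : ∀ x ∈ C, ∀ y ∈ C, torusDist x y ≤ 4 * r := fun x hx y hy => by
      simpa using hbox 0 x y (apply_eq_of_mem_fiberCells hC hx hy)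
    refine ⟨torusRConnected_of_forall_torusDist_le fun x hx y hy =>
      (h4r x hx y hy).trans (by omega), fun x hx => ?_⟩
    rw [Set.inter_eq_self_of_subset_left (t := torusBall x (4 * r)) fun y hy => h4r x hx y hy]
    simpa using le_ncard_of_mem_fiberCells_denseCore hC
end
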